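/- arXiv:2505.08014 — 16 statements merged into one kernel-verified Lean document; each statement's English description precedes it below -/
import Mathlib

section
/- Let A be a temporal Heyting algebra, a ∈ A, and x a prime filter of A. Then ◆a ∈ x if and only if there exists a prime filter w of A with a ∈ w and x R◁ w (i.e., ◆b ∈ x for every b ∈ w). -/
/-- A prime filter of a Heyting algebra. -/
def IsPrimeFilter {A : Type*} [HeytingAlgebra A] (x : Set A) : Prop :=
  (⊤ : A) ∈ x ∧ (⊥ : A) ∉ x ∧ (∀ a b : A, a ∈ x → a ≤ b → b ∈ x) ∧
  (∀ a b : A, a ∈ x → b ∈ x → a ⊓ b ∈ x) ∧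
  (∀ a b : A, a ⊔ b ∈ x → a ∈ x ∨ b ∈ x)

/-- `◆a ∈ x` iff there is a prime filter `w` with `a ∈ w` and `x R◁ w`. -/
theorem stmt1 {A : Type*} [HeytingAlgebra A] (box dia : A → A)
    (hbox_meet : ∀ a b : A, box (a ⊓ b) = box a ⊓ box b)
    (hbox_incr : ∀ a : A, a ≤ box a)
    (hbox_front : ∀ a b : A, box a ≤ b ⊔ (b ⇨ a))
    (hadj : ∀ a b : A, dia a ≤ b ↔ a ≤ box b)
    (a : A) (x : Set A) (hx : IsPrimeFilter x) :
    dia a ∈ x ↔ ∃ w : Set A, IsPrimeFilter w ∧ a ∈ w ∧ ∀ b ∈ w, dia b ∈ x := by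
  obtain ⟨htop, hbot, hup, hmeetx, hprimex⟩ := hx
  have dia_mono : ∀ b c : A, b ≤ c → dia b ≤ dia c := fun b c h =>
    (hadj b (dia c)).mpr (h.trans ((hadj c (dia c)).mp le_rfl))
  have dia_sup : ∀ b c : A, dia (b ⊔ c) = dia b ⊔ dia c := by
    intro b c
    refine le_antisymm ((hadj _ _).mpr (sup_le ?_ ?_)) (sup_le (dia_mono _ _ le_sup_left) (dia_mono _ _ le_sup_right))
    · exact (hadj b _).mp le_sup_left
    · exact (hadj c _).mp le_sup_right
  constructor
  · intro hda
    set S : Set (Set A) := {w | a ∈ w ∧ (∀ b c : A, b ∈ w → b ≤ c → c ∈ w) ∧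
      (∀ b c : A, b ∈ w → c ∈ w → b ⊓ c ∈ w) ∧ (∀ b ∈ w, dia b ∈ x)} with hS
    have hbase : {b : A | a ≤ b} ∈ S :=
      ⟨le_rfl, fun b c hb hbc => hb.trans hbc, fun b c hb hc => le_inf hb hc,
        fun b hb => hup _ _ hda (dia_mono _ _ hb)⟩
    have hchain : ∀ c ⊆ S, IsChain (· ⊆ ·) c → c.Nonempty →
        ∃ ub ∈ S, ∀ s ∈ c, s ⊆ ub := by
      intro c hcS hchain ⟨w0, hw0⟩
      refine ⟨⋃₀ c, ⟨Set.mem_sUnion.mpr ⟨w0, hw0, (hcS hw0).1⟩, ?_, ?_, ?_⟩,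
        fun s hs => Set.subset_sUnion_of_mem hs⟩
      · rintro b e ⟨w, hw, hb⟩ hbe
        exact ⟨w, hw, (hcS hw).2.1 b e hb hbe⟩
      · rintro b e ⟨w1, hw1, hb⟩ ⟨w2, hw2, he⟩
        rcases hchain.total hw1 hw2 with h | h
        · exact ⟨w2, hw2, (hcS hw2).2.2.1 b e (h hb) he⟩
        · exact ⟨w1, hw1, (hcS hw1).2.2.1 b e hb (h he)⟩
      · rintro b ⟨w, hw, hb⟩
        exact (hcS hw).2.2.2 b hb
    obtain ⟨w, -, hwS, hmax⟩ := zorn_subset_nonempty S hchain _ hbase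
    obtain ⟨haw, hupw, hmeetw, hdw⟩ := hwS
    -- key extension lemma
    have key : ∀ b : A, b ∉ w → ∃ d ∈ w, dia (d ⊓ b) ∉ x := by
      intro b hb
      by_contra h
      push_neg at h
      set wb : Set A := {e | ∃ d ∈ w, d ⊓ b ≤ e} with hwb
      have hwbS : wb ∈ S := by
        refine ⟨⟨a, haw, inf_le_left.trans le_rfl⟩, ?_, ?_, ?_⟩
        · rintro e f ⟨d, hd, hde⟩ hef; exact ⟨d, hd, hde.trans hef⟩
        · rintro e f ⟨d1, hd1, h1⟩ ⟨d2, hd2, h2⟩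
          exact ⟨d1 ⊓ d2, hmeetw _ _ hd1 hd2,
            le_inf ((inf_le_inf inf_le_left le_rfl).trans h1)
              ((inf_le_inf inf_le_right le_rfl).trans h2)⟩
        · rintro e ⟨d, hd, hde⟩
          exact hup _ _ (h d hd) (dia_mono _ _ hde)
      have hsub : w ⊆ wb := fun e he => ⟨e, he, inf_le_left⟩
      have : wb = w := (hmax hwbS hsub).antisymm hsub
      exact hb (this ▸ ⟨⊤, hupw _ _ haw le_top, by simp⟩)
    refine ⟨w, ⟨hupw _ _ haw le_top, ?_, hupw, hmeetw, ?_⟩, haw, hdw⟩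
    · intro hbw
      exact hbot (hup _ _ (hdw _ hbw) ((hadj ⊥ ⊥).mpr bot_le))
    · intro b c hsup
      by_contra hcon
      push_neg at hcon
      obtain ⟨hb, hc⟩ := hcon
      obtain ⟨d1, hd1, h1⟩ := key b hb
      obtain ⟨d2, hd2, h2⟩ := key c hc
      set d := d1 ⊓ d2 with hd
      have hdmem : d ∈ w := hmeetw _ _ hd1 hd2
      have hmem : d ⊓ (b ⊔ c) ∈ w := hmeetw _ _ hdmem hsup
      have : dia (d ⊓ (b ⊔ c)) ∈ x := hdw _ hmem
      rw [inf_sup_left, dia_sup] at this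
      rcases hprimex _ _ this with h | h
      · exact h1 (hup _ _ h (dia_mono _ _ (inf_le_inf inf_le_left le_rfl)))
      · exact h2 (hup _ _ h (dia_mono _ _ (inf_le_inf inf_le_right le_rfl)))
  · rintro ⟨w, hw, haw, hR⟩
    exact hR a haw
end

section
/- Let h : A → B be a homomorphism of temporal Heyting algebras (a lattice homomorphism preserving 0, 1, ⇨, □, and ◆). Let x₂ be a prime filter of B and y a prime filter of A such that h(◆a) ∈ x₂ for every a ∈ y. Then there exists a prime filter x₁ of B such that ◆b ∈ x₂ for every b ∈ x₁, and h(a) ∈ x₁ for every a ∈ y. -/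
/-- Back condition for the dual of a temporal Heyting algebra homomorphism. -/
theorem stmt2 {A B : Type*} [HeytingAlgebra A] [HeytingAlgebra B]
    (boxA diaA : A → A) (boxB diaB : B → B)
    (hbox_meetA : ∀ a b : A, boxA (a ⊓ b) = boxA a ⊓ boxA b)
    (hbox_incrA : ∀ a : A, a ≤ boxA a)
    (hbox_frontA : ∀ a b : A, boxA a ≤ b ⊔ (b ⇨ a))
    (hadjA : ∀ a b : A, diaA a ≤ b ↔ a ≤ boxA b)
    (hbox_meetB : ∀ a b : B, boxB (a ⊓ b) = boxB a ⊓ boxB b)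
    (hbox_incrB : ∀ a : B, a ≤ boxB a)
    (hbox_frontB : ∀ a b : B, boxB a ≤ b ⊔ (b ⇨ a))
    (hadjB : ∀ a b : B, diaB a ≤ b ↔ a ≤ boxB b)
    (h : A → B)
    (h_top : h ⊤ = ⊤) (h_bot : h ⊥ = ⊥)
    (h_inf : ∀ a b : A, h (a ⊓ b) = h a ⊓ h b)
    (h_sup : ∀ a b : A, h (a ⊔ b) = h a ⊔ h b)
    (h_himp : ∀ a b : A, h (a ⇨ b) = h a ⇨ h b)
    (h_box : ∀ a : A, h (boxA a) = boxB (h a))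
    (h_dia : ∀ a : A, h (diaA a) = diaB (h a))
    (x₂ : Set B) (hx₂ : IsPrimeFilter x₂)
    (y : Set A) (hy : IsPrimeFilter y)
    (hR : ∀ a ∈ y, h (diaA a) ∈ x₂) :
    ∃ x₁ : Set B, IsPrimeFilter x₁ ∧ (∀ b ∈ x₁, diaB b ∈ x₂) ∧ (∀ a ∈ y, h a ∈ x₁) := by
  obtain ⟨hx₂top, hx₂bot, hx₂up, hx₂meet, hx₂prime⟩ := hx₂
  obtain ⟨hytop, hybot, hyup, hymeet, hyprime⟩ := hy
  -- box is monotone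
  have hboxBmono : ∀ a b : B, a ≤ b → boxB a ≤ boxB b := by
    intro a b hab
    have : boxB (a ⊓ b) = boxB a := by rw [inf_eq_left.2 hab]
    calc boxB a = boxB a ⊓ boxB b := by rw [← hbox_meetB, inf_eq_left.2 hab]
    _ ≤ boxB b := inf_le_right
  have hdiaBmono : ∀ a b : B, a ≤ b → diaB a ≤ diaB b := by
    intro a b hab
    rw [hadjB]
    exact le_trans hab ((hadjB b (diaB b)).1 le_rfl)
  have hdiaBbot : diaB ⊥ = ⊥ := le_bot_iff.1 ((hadjB ⊥ ⊥).2 bot_le)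
  have hdiaBsup : ∀ a b : B, diaB (a ⊔ b) ≤ diaB a ⊔ diaB b := by
    intro a b
    rw [hadjB]
    exact sup_le (le_trans ((hadjB a _).1 (le_sup_left)) (hboxBmono _ _ le_rfl))
      (le_trans ((hadjB b (diaB a ⊔ diaB b)).1 le_sup_right) le_rfl)
  -- The ideal I = {b | diaB b ∉ x₂}
  set Iset : Set B := {b : B | diaB b ∉ x₂} with hIset
  have hIideal : Order.IsIdeal Iset := by
    refine ⟨?_, ⟨⊥, ?_⟩, ?_⟩
    · intro b c hbc hc hb
      exact hc (hx₂up _ _ hb (hdiaBmono _ _ hbc))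
    · simp only [Iset, Set.mem_setOf_eq, hdiaBbot]; exact hx₂bot
    · intro b hb c hc
      refine ⟨b ⊔ c, ?_, le_sup_left, le_sup_right⟩
      intro hmem
      rcases hx₂prime _ _ (hx₂up _ _ hmem (hdiaBsup b c)) with h1 | h1
      · exact hb h1
      · exact hc h1
  -- The filter F = {b | ∃ a ∈ y, h a ≤ b}
  set Fset : Set B := {b : B | ∃ a ∈ y, h a ≤ b} with hFset
  have hFfilter : Order.IsPFilter Fset := by
    refine Order.IsPFilter.of_def ⟨⊤, ⊤, hytop, by rw [h_top]⟩ ?_ ?_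
    · intro b hb c hc
      obtain ⟨a₁, ha₁, hle₁⟩ := hb
      obtain ⟨a₂, ha₂, hle₂⟩ := hc
      exact ⟨b ⊓ c, ⟨a₁ ⊓ a₂, hymeet _ _ ha₁ ha₂,
        by rw [h_inf]; exact inf_le_inf hle₁ hle₂⟩, inf_le_left, inf_le_right⟩
    · intro b c hbc ⟨a, ha, hle⟩
      exact ⟨a, ha, le_trans hle hbc⟩
  set F : Order.PFilter B := hFfilter.toPFilter with hF
  have hFmem : ∀ b : B, b ∈ F ↔ b ∈ Fset := fun b => Iff.rfl
  have hdisj : Disjoint (F : Set B) ((hIideal.toIdeal : Order.Ideal B) : Set B) := by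
    rw [Set.disjoint_left]
    rintro b ⟨a, ha, hle⟩ hbI
    exact hbI (hx₂up _ _ (by rw [← h_dia]; exact hR a ha) (hdiaBmono _ _ hle))
  obtain ⟨J, hJprime, hIJ, hJdisj⟩ :=
    DistribLattice.prime_ideal_of_disjoint_filter_ideal hdisj
  refine ⟨(J : Set B)ᶜ, ⟨?_, ?_, ?_, ?_, ?_⟩, ?_, ?_⟩
  · exact Set.disjoint_left.1 hJdisj ⟨⊤, hytop, h_top.le⟩
  · simp only [Set.mem_compl_iff, not_not]; exact J.bot_mem
  · intro a b ha hab hb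
    exact ha (J.lower hab hb)
  · intro a b ha hb
    intro hab
    rcases hJprime.mem_or_mem hab with h1 | h1
    · exact ha h1
    · exact hb h1
  · intro a b hab
    by_contra hcon
    push_neg at hcon
    obtain ⟨h1, h2⟩ := hcon
    simp only [Set.mem_compl_iff, not_not] at h1 h2
    exact hab (J.sup_mem h1 h2)
  · intro b hb
    by_contra hdia
    exact hb (hIJ hdia)
  · intro a ha
    exact Set.disjoint_left.1 hJdisj ⟨a, ha, le_rfl⟩
end

section
/- Let A be a temporal Heyting algebra and θ a congruence on A. Then F := {a ∈ A : a θ 1} is a ◆-filter of A: 1 ∈ F, F is upward closed, F is closed under binary meets, and a ⇨ b ∈ F implies ◆a ⇨ ◆b ∈ F. -/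
/-- A congruence of a temporal Heyting algebra. -/
def IsCong {A : Type*} [HeytingAlgebra A] (box dia : A → A) (θ : A → A → Prop) : Prop :=
  Equivalence θ ∧
  (∀ a b c d : A, θ a b → θ c d → θ (a ⊓ c) (b ⊓ d)) ∧
  (∀ a b c d : A, θ a b → θ c d → θ (a ⊔ c) (b ⊔ d)) ∧
  (∀ a b c d : A, θ a b → θ c d → θ (a ⇨ c) (b ⇨ d)) ∧
  (∀ a b : A, θ a b → θ (box a) (box b)) ∧
  (∀ a b : A, θ a b → θ (dia a) (dia b))

/-- The equivalence class of ⊤ under a congruence is a ◆-filter. -/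
theorem stmt4 {A : Type*} [HeytingAlgebra A] (box dia : A → A)
    (hbox_meet : ∀ a b : A, box (a ⊓ b) = box a ⊓ box b)
    (hbox_incr : ∀ a : A, a ≤ box a)
    (hbox_front : ∀ a b : A, box a ≤ b ⊔ (b ⇨ a))
    (hadj : ∀ a b : A, dia a ≤ b ↔ a ≤ box b)
    (θ : A → A → Prop) (hθ : IsCong box dia θ) :
    (⊤ : A) ∈ {a : A | θ a ⊤} ∧
    (∀ a b : A, a ∈ {a : A | θ a ⊤} → a ≤ b → b ∈ {a : A | θ a ⊤}) ∧
    (∀ a b : A, a ∈ {a : A | θ a ⊤} → b ∈ {a : A | θ a ⊤} → a ⊓ b ∈ {a : A | θ a ⊤}) ∧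
    (∀ a b : A, a ⇨ b ∈ {a : A | θ a ⊤} → dia a ⇨ dia b ∈ {a : A | θ a ⊤}) := by
  obtain ⟨heq, hmeet, hjoin, himp, hb, hd⟩ := hθ
  have hdia_mono : ∀ x y : A, x ≤ y → dia x ≤ dia y := by
    intro x y hxy
    exact (hadj x (dia y)).2 (hxy.trans ((hadj y (dia y)).1 le_rfl))
  refine ⟨heq.refl ⊤, ?_, ?_, ?_⟩
  · intro a b ha hab
    have : θ (b ⊔ a) (b ⊔ ⊤) := hjoin b b a ⊤ (heq.refl b) ha
    simpa [sup_eq_left.2 hab] using this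
  · intro a b ha hb'
    simpa using hmeet a ⊤ b ⊤ ha hb'
  · intro a b ha
    have h1 : θ (a ⊓ (a ⇨ b)) (a ⊓ ⊤) := hmeet a a (a ⇨ b) ⊤ (heq.refl a) ha
    have h2 : θ (a ⊓ b) a := by simpa [inf_himp] using h1
    have h3 : θ (dia (a ⊓ b) ⇨ dia b) (dia a ⇨ dia b) :=
      himp _ _ _ _ (hd _ _ h2) (heq.refl (dia b))
    have h4 : dia (a ⊓ b) ⇨ dia b = ⊤ :=
      himp_eq_top_iff.2 (hdia_mono _ _ inf_le_right)
    have h5 : θ (dia (a ⊓ b) ⇨ dia b) ⊤ := by rw [h4]; exact heq.refl ⊤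
    exact heq.trans (heq.symm h3) h5
end

section
/- Let A be a temporal Heyting algebra and F a ◆-filter of A. Define a θ b ⟺ (a ⇨ b) ⊓ (b ⇨ a) ∈ F. Then θ is a congruence on A; in particular, a θ b implies (□a) θ (□b) and (◆a) θ (◆b). -/
/-- A ◆-filter of a temporal Heyting algebra. -/
def IsDiaFilter {A : Type*} [HeytingAlgebra A] (dia : A → A) (F : Set A) : Prop :=
  (⊤ : A) ∈ F ∧ (∀ a b : A, a ∈ F → a ≤ b → b ∈ F) ∧
  (∀ a b : A, a ∈ F → b ∈ F → a ⊓ b ∈ F) ∧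
  (∀ a b : A, a ⇨ b ∈ F → dia a ⇨ dia b ∈ F)

/-- The relation induced by a ◆-filter is a congruence. -/
theorem stmt5 {A : Type*} [HeytingAlgebra A] (box dia : A → A)
    (hbox_meet : ∀ a b : A, box (a ⊓ b) = box a ⊓ box b)
    (hbox_incr : ∀ a : A, a ≤ box a)
    (hbox_front : ∀ a b : A, box a ≤ b ⊔ (b ⇨ a))
    (hadj : ∀ a b : A, dia a ≤ b ↔ a ≤ box b)
    (F : Set A) (hF : IsDiaFilter dia F) :
    IsCong box dia (fun a b : A => (a ⇨ b) ⊓ (b ⇨ a) ∈ F) := by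
  obtain ⟨htop, hup, hmeetF, hdiaF⟩ := hF
  -- box is monotone
  have hmono : ∀ a b : A, a ≤ b → box a ≤ box b := by
    intro a b hab
    have : box (a ⊓ b) = box a ⊓ box b := hbox_meet a b
    rw [inf_eq_left.2 hab] at this
    exact this.le.trans inf_le_right
  -- membership helper
  have key : ∀ a b x y : A, (a ⇨ b) ⊓ (b ⇨ a) ∈ F → (a ⇨ b) ⊓ (b ⇨ a) ≤ (x ⇨ y) ⊓ (y ⇨ x) →
      (x ⇨ y) ⊓ (y ⇨ x) ∈ F := fun a b x y h hle => hup _ _ h hle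
  refine ⟨⟨?_, ?_, ?_⟩, ?_, ?_, ?_, ?_, ?_⟩
  · intro a
    exact hup ⊤ _ htop (by simp)
  · intro a b h
    exact hup _ _ h (by rw [inf_comm])
  · intro a b c hab hbc
    refine hup _ _ (hmeetF _ _ hab hbc) (le_inf ?_ ?_) <;> rw [le_himp_iff]
    · calc ((a ⇨ b) ⊓ (b ⇨ a)) ⊓ ((b ⇨ c) ⊓ (c ⇨ b)) ⊓ a
          ≤ ((b ⇨ c) ⊓ (a ⇨ b)) ⊓ a := by
            apply inf_le_inf_right
            exact le_inf (inf_le_right.trans inf_le_left) (inf_le_left.trans inf_le_left)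
        _ ≤ (b ⇨ c) ⊓ b := by
            rw [inf_assoc]; exact inf_le_inf_left _ himp_inf_le
        _ ≤ c := himp_inf_le
    · calc ((a ⇨ b) ⊓ (b ⇨ a)) ⊓ ((b ⇨ c) ⊓ (c ⇨ b)) ⊓ c
          ≤ ((b ⇨ a) ⊓ (c ⇨ b)) ⊓ c := by
            apply inf_le_inf_right
            exact le_inf (inf_le_left.trans inf_le_right) (inf_le_right.trans inf_le_right)
        _ ≤ (b ⇨ a) ⊓ b := by
            rw [inf_assoc]; exact inf_le_inf_left _ himp_inf_le
        _ ≤ a := himp_inf_le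
  · -- meet
    intro a b c d hab hcd
    refine hup _ _ (hmeetF _ _ hab hcd) (le_inf ?_ ?_) <;> rw [le_himp_iff]
    · refine le_inf ?_ ?_
      · calc ((a ⇨ b) ⊓ (b ⇨ a)) ⊓ ((c ⇨ d) ⊓ (d ⇨ c)) ⊓ (a ⊓ c)
            ≤ (a ⇨ b) ⊓ a := inf_le_inf (inf_le_left.trans inf_le_left) inf_le_left
          _ ≤ b := himp_inf_le
      · calc ((a ⇨ b) ⊓ (b ⇨ a)) ⊓ ((c ⇨ d) ⊓ (d ⇨ c)) ⊓ (a ⊓ c)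
            ≤ (c ⇨ d) ⊓ c := inf_le_inf (inf_le_right.trans inf_le_left) inf_le_right
          _ ≤ d := himp_inf_le
    · refine le_inf ?_ ?_
      · calc ((a ⇨ b) ⊓ (b ⇨ a)) ⊓ ((c ⇨ d) ⊓ (d ⇨ c)) ⊓ (b ⊓ d)
            ≤ (b ⇨ a) ⊓ b := inf_le_inf (inf_le_left.trans inf_le_right) inf_le_left
          _ ≤ a := himp_inf_le
      · calc ((a ⇨ b) ⊓ (b ⇨ a)) ⊓ ((c ⇨ d) ⊓ (d ⇨ c)) ⊓ (b ⊓ d)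
            ≤ (d ⇨ c) ⊓ d := inf_le_inf (inf_le_right.trans inf_le_right) inf_le_right
          _ ≤ c := himp_inf_le
  · -- join
    intro a b c d hab hcd
    refine hup _ _ (hmeetF _ _ hab hcd) (le_inf ?_ ?_) <;> rw [le_himp_iff, inf_sup_left]
    · refine sup_le ?_ ?_
      · calc ((a ⇨ b) ⊓ (b ⇨ a)) ⊓ ((c ⇨ d) ⊓ (d ⇨ c)) ⊓ a
            ≤ (a ⇨ b) ⊓ a := inf_le_inf_right a (inf_le_left.trans inf_le_left)
          _ ≤ b := himp_inf_le
          _ ≤ b ⊔ d := le_sup_left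
      · calc ((a ⇨ b) ⊓ (b ⇨ a)) ⊓ ((c ⇨ d) ⊓ (d ⇨ c)) ⊓ c
            ≤ (c ⇨ d) ⊓ c := inf_le_inf_right c (inf_le_right.trans inf_le_left)
          _ ≤ d := himp_inf_le
          _ ≤ b ⊔ d := le_sup_right
    · refine sup_le ?_ ?_
      · calc ((a ⇨ b) ⊓ (b ⇨ a)) ⊓ ((c ⇨ d) ⊓ (d ⇨ c)) ⊓ b
            ≤ (b ⇨ a) ⊓ b := inf_le_inf_right b (inf_le_left.trans inf_le_right)
          _ ≤ a := himp_inf_le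
          _ ≤ a ⊔ c := le_sup_left
      · calc ((a ⇨ b) ⊓ (b ⇨ a)) ⊓ ((c ⇨ d) ⊓ (d ⇨ c)) ⊓ d
            ≤ (d ⇨ c) ⊓ d := inf_le_inf_right d (inf_le_right.trans inf_le_right)
          _ ≤ c := himp_inf_le
          _ ≤ a ⊔ c := le_sup_right
  · -- himp
    intro a b c d hab hcd
    refine hup _ _ (hmeetF _ _ hab hcd) (le_inf ?_ ?_) <;>
      rw [le_himp_iff, le_himp_iff]
    · calc ((a ⇨ b) ⊓ (b ⇨ a)) ⊓ ((c ⇨ d) ⊓ (d ⇨ c)) ⊓ (a ⇨ c) ⊓ b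
          ≤ ((c ⇨ d) ⊓ (a ⇨ c)) ⊓ ((b ⇨ a) ⊓ b) := by
            refine le_inf (le_inf ?_ ?_) (le_inf ?_ ?_)
            · exact inf_le_left.trans <| inf_le_left.trans <| inf_le_right.trans inf_le_left
            · exact inf_le_left.trans inf_le_right
            · exact inf_le_left.trans <| inf_le_left.trans <| inf_le_left.trans inf_le_right
            · exact inf_le_right
        _ ≤ ((c ⇨ d) ⊓ (a ⇨ c)) ⊓ a := inf_le_inf_left _ himp_inf_le
        _ ≤ (c ⇨ d) ⊓ c := by
            rw [inf_assoc]; exact inf_le_inf_left _ himp_inf_le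
        _ ≤ d := himp_inf_le
    · calc ((a ⇨ b) ⊓ (b ⇨ a)) ⊓ ((c ⇨ d) ⊓ (d ⇨ c)) ⊓ (b ⇨ d) ⊓ a
          ≤ ((d ⇨ c) ⊓ (b ⇨ d)) ⊓ ((a ⇨ b) ⊓ a) := by
            refine le_inf (le_inf ?_ ?_) (le_inf ?_ ?_)
            · exact inf_le_left.trans <| inf_le_left.trans <| inf_le_right.trans inf_le_right
            · exact inf_le_left.trans inf_le_right
            · exact inf_le_left.trans <| inf_le_left.trans <| inf_le_left.trans inf_le_left
            · exact inf_le_right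
        _ ≤ ((d ⇨ c) ⊓ (b ⇨ d)) ⊓ b := inf_le_inf_left _ himp_inf_le
        _ ≤ (d ⇨ c) ⊓ d := by
            rw [inf_assoc]; exact inf_le_inf_left _ himp_inf_le
        _ ≤ c := himp_inf_le
  · -- box
    intro a b hab
    set c : A := (a ⇨ b) ⊓ (b ⇨ a) with hc
    have hca : c ⊓ a = c ⊓ b := by
      apply le_antisymm
      · exact le_inf inf_le_left
          ((inf_le_inf_right a inf_le_left).trans himp_inf_le)
      · exact le_inf inf_le_left
          ((inf_le_inf_right b inf_le_right).trans himp_inf_le)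
    have hbox : ∀ x y : A, c ⊓ x = c ⊓ y → c ⊓ box x ≤ box y := by
      intro x y hxy
      calc c ⊓ box x ≤ box c ⊓ box x := inf_le_inf_right _ (hbox_incr c)
        _ = box (c ⊓ x) := (hbox_meet c x).symm
        _ = box (c ⊓ y) := by rw [hxy]
        _ ≤ box y := hmono _ _ inf_le_right
    exact hup _ _ hab (le_inf (le_himp_iff.2 (hbox a b hca)) (le_himp_iff.2 (hbox b a hca.symm)))
  · -- dia
    intro a b hab
    have h1 : a ⇨ b ∈ F := hup _ _ hab inf_le_left
    have h2 : b ⇨ a ∈ F := hup _ _ hab inf_le_right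
    exact hmeetF _ _ (hdiaF _ _ h1) (hdiaF _ _ h2)
end

section
/- Let A be a temporal Heyting algebra, F a ◆-filter of A, and x, z prime filters of A such that x ⊆ z, F ⊆ z, and F ⊈ x. Then there exists a prime filter y of A with F ⊆ y, x ⊆ y, and ◆a ∈ z for every a ∈ y. -/
/-- The archival property of the closed upset dual to a ◆-filter. -/
theorem stmt6 {A : Type*} [HeytingAlgebra A] (box dia : A → A)
    (hbox_meet : ∀ a b : A, box (a ⊓ b) = box a ⊓ box b)
    (hbox_incr : ∀ a : A, a ≤ box a)
    (hbox_front : ∀ a b : A, box a ≤ b ⊔ (b ⇨ a))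
    (hadj : ∀ a b : A, dia a ≤ b ↔ a ≤ box b)
    (F x z : Set A) (hF : IsDiaFilter dia F)
    (hx : IsPrimeFilter x) (hz : IsPrimeFilter z)
    (hxz : x ⊆ z) (hFz : F ⊆ z) (hFx : ¬ F ⊆ x) :
    ∃ y : Set A, IsPrimeFilter y ∧ F ⊆ y ∧ x ⊆ y ∧ ∀ a ∈ y, dia a ∈ z := by
  obtain ⟨hFtop, hFup, hFmeet, hFdia⟩ := hF
  obtain ⟨hxtop, hxbot, hxup, hxmeet, hxprime⟩ := hx
  obtain ⟨hztop, hzbot, hzup, hzmeet, hzprime⟩ := hz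
  -- basic facts about box and dia
  have box_mono : ∀ a b : A, a ≤ b → box a ≤ box b := by
    intro a b hab
    have : a ⊓ b = a := inf_eq_left.2 hab
    calc box a = box (a ⊓ b) := by rw [this]
      _ = box a ⊓ box b := hbox_meet a b
      _ ≤ box b := inf_le_right
  have unit : ∀ a : A, a ≤ box (dia a) := fun a => (hadj a (dia a)).1 le_rfl
  have dia_mono : ∀ a b : A, a ≤ b → dia a ≤ dia b := by
    intro a b hab
    exact (hadj a (dia b)).2 (hab.trans (unit b))
  have star : ∀ a b : A, a ≤ b ⊔ (b ⇨ dia a) := by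
    intro a b
    exact (unit a).trans (hbox_front (dia a) b)
  have dia_sup : ∀ a b : A, dia (a ⊔ b) ≤ dia a ⊔ dia b := by
    intro a b
    refine (hadj _ _).2 (sup_le ?_ ?_)
    · exact (unit a).trans (box_mono _ _ le_sup_left)
    · exact (unit b).trans (box_mono _ _ le_sup_right)
  have dia_bot : dia (⊥ : A) ≤ ⊥ := (hadj _ _).2 bot_le
  -- a witness in F \ x
  obtain ⟨h₀, hh₀F, hh₀x⟩ := Set.not_subset.1 hFx
  -- key lemma 1: dia b ∈ z for b ∈ x
  have key1 : ∀ b ∈ x, dia b ∈ z := by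
    intro b hb
    have h1 : h₀ ⊔ (h₀ ⇨ dia b) ∈ x := hxup b _ hb (star b h₀)
    rcases hxprime _ _ h1 with h2 | h2
    · exact absurd h2 hh₀x
    · have h3 : h₀ ⊓ (h₀ ⇨ dia b) ∈ z := hzmeet _ _ (hFz hh₀F) (hxz h2)
      exact hzup _ _ h3 inf_himp_le
  -- key lemma 2: dia (f ⊓ b) ∈ z for f ∈ F, b ∈ x
  have key2 : ∀ f ∈ F, ∀ b ∈ x, dia (f ⊓ b) ∈ z := by
    intro f hf b hb
    have h1 : b ⇨ (f ⊓ b) ∈ F := hFup f _ hf (le_himp_iff.2 le_rfl)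
    have h2 : dia b ⇨ dia (f ⊓ b) ∈ z := hFz (hFdia _ _ h1)
    have h3 : dia b ⊓ (dia b ⇨ dia (f ⊓ b)) ∈ z := hzmeet _ _ (key1 b hb) h2
    exact hzup _ _ h3 inf_himp_le
  -- the ideal of elements whose dia is outside z
  have hI : Order.IsIdeal {a : A | dia a ∉ z} := by
    constructor
    · intro a b hab hb ha
      exact hb (hzup _ _ ha (dia_mono _ _ hab))
    · exact ⟨⊥, fun h => hzbot (hzup _ _ h dia_bot)⟩
    · intro a ha b hb
      refine ⟨a ⊔ b, ?_, le_sup_left, le_sup_right⟩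
      intro h
      rcases hzprime _ _ (hzup _ _ h (dia_sup a b)) with h' | h'
      · exact ha h'
      · exact hb h'
  -- the filter generated by F ∪ x
  have hG : Order.IsPFilter {a : A | ∃ f ∈ F, ∃ b ∈ x, f ⊓ b ≤ a} := by
    refine Order.IsPFilter.of_def ⟨⊤, ⊤, hFtop, ⊤, hxtop, le_top⟩ ?_ ?_
    · rintro a ⟨f₁, hf₁, b₁, hb₁, h₁⟩ c ⟨f₂, hf₂, b₂, hb₂, h₂⟩
      refine ⟨a ⊓ c, ⟨f₁ ⊓ f₂, hFmeet _ _ hf₁ hf₂, b₁ ⊓ b₂, hxmeet _ _ hb₁ hb₂, ?_⟩,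
        inf_le_left, inf_le_right⟩
      refine le_inf (le_trans ?_ h₁) (le_trans ?_ h₂)
      · exact inf_le_inf inf_le_left inf_le_left
      · exact inf_le_inf inf_le_right inf_le_right
    · rintro a c hac ⟨f, hf, b, hb, h⟩
      exact ⟨f, hf, b, hb, h.trans hac⟩
  -- they are disjoint
  have hdisj : Disjoint ((hG.toPFilter : Order.PFilter A) : Set A)
      ((hI.toIdeal : Order.Ideal A) : Set A) := by
    rw [Set.disjoint_left]
    rintro a ⟨f, hf, b, hb, h⟩ ha
    exact ha (hzup _ _ (key2 f hf b hb) (dia_mono _ _ h))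
  obtain ⟨J, hJprime, hIJ, hJdisj⟩ :=
    DistribLattice.prime_ideal_of_disjoint_filter_ideal hdisj
  rw [Set.disjoint_left] at hJdisj
  refine ⟨(J : Set A)ᶜ, ⟨?_, ?_, ?_, ?_, ?_⟩, ?_, ?_, ?_⟩
  · exact hJdisj ⟨⊤, hFtop, ⊤, hxtop, le_top⟩
  · simp only [Set.mem_compl_iff, not_not]
    exact J.bot_mem
  · intro a b ha hab hb
    exact ha (J.lower hab hb)
  · intro a b ha hb h
    rcases hJprime.mem_or_mem h with h' | h'
    · exact ha h'
    · exact hb h'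
  · intro a b h
    by_contra hcon
    push_neg at hcon
    simp only [Set.mem_compl_iff, not_not] at hcon
    exact h (Order.Ideal.sup_mem hcon.1 hcon.2)
  · intro f hf
    exact hJdisj ⟨f, hf, ⊤, hxtop, inf_le_left⟩
  · intro b hb
    exact hJdisj ⟨⊤, hFtop, b, hb, inf_le_right⟩
  · intro a ha
    by_contra h
    exact ha (hIJ (show a ∈ hI.toIdeal from h))
end

section
/- Let A be a temporal Heyting algebra and let C be a set of prime filters of A that is upward closed under inclusion (x ∈ C and x ⊆ y imply y ∈ C) and archival: whenever z, x are prime filters with (◆a ∈ z for all a ∈ x), x ∉ C, and z ∈ C, there exists a prime filter y ∈ C with x ⊆ y and (◆a ∈ z for all a ∈ y). Then for all a, b ∈ A: if a ⇨ b belongs to every member of C, then ◆a ⇨ ◆b belongs to every member of C; hence the intersection of C is a ◆-filter of A. -/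
/-!
Suppose `a ⇨ b` lies in every member of `C` but `◆a ⇨ ◆b ∉ z` for some `z ∈ C`. Extending
`z` by `◆a` away from `◆b` gives a prime filter `w ⊇ z`, so `w ∈ C`, with `◆a ∈ w` and
`◆b ∉ w`. Since `◆` is a left adjoint it preserves finite joins, so `{e | ◆e ∉ w}` is an ideal
missing `a`, and the prime filter theorem gives a prime `x ∋ a` with `◆[x] ⊆ w`. Either `x ∈ C`
or archivality replaces it by some `y ∈ C` with the same properties; then `a, a ⇨ b ∈ y`, so
`b ∈ y` and `◆b ∈ w`, a contradiction.
-/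

open Order

lemma isPFilter_of_inf_mem {P : Type*} [SemilatticeInf P] [OrderTop P] {F : Set P}
    (htop : ⊤ ∈ F) (hup : ∀ a b : P, a ∈ F → a ≤ b → b ∈ F)
    (hinf : ∀ a b : P, a ∈ F → b ∈ F → a ⊓ b ∈ F) : IsPFilter F :=
  IsPFilter.of_def ⟨⊤, htop⟩
    (fun a ha b hb => ⟨a ⊓ b, hinf a b ha hb, inf_le_left, inf_le_right⟩)
    (fun hab ha => hup _ _ ha hab)

lemma isIdeal_of_sup_mem {P : Type*} [SemilatticeSup P] [OrderBot P] {I : Set P}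
    (hbot : ⊥ ∈ I) (hdown : ∀ a b : P, b ∈ I → a ≤ b → a ∈ I)
    (hsup : ∀ a b : P, a ∈ I → b ∈ I → a ⊔ b ∈ I) : IsIdeal I :=
  ⟨fun _ _ hab hb => hdown _ _ hb hab, ⟨⊥, hbot⟩,
    fun a ha b hb => ⟨a ⊔ b, hsup a b ha hb, le_sup_left, le_sup_right⟩⟩

section PrimeFilter

variable {A : Type*} [HeytingAlgebra A]

lemma IsPrimeFilter.isPFilter {x : Set A} (hx : IsPrimeFilter x) : IsPFilter x :=
  isPFilter_of_inf_mem hx.1 hx.2.2.1 hx.2.2.2.1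

lemma Order.Ideal.IsPrime.isPrimeFilter_compl {J : Ideal A} (hJ : J.IsPrime) :
    IsPrimeFilter (J : Set A)ᶜ := by
  refine ⟨hJ.top_notMem, fun h => h J.bot_mem, fun a b ha hab hb => ha (J.lower hab hb),
    fun a b ha hb hab => (hJ.mem_or_mem hab).elim ha hb, fun a b hab => ?_⟩
  by_contra! h
  exact hab (Ideal.sup_mem (not_not.mp h.1) (not_not.mp h.2))

lemma exists_isPrimeFilter_of_disjoint {F : PFilter A} {I : Ideal A}
    (hFI : Disjoint (F : Set A) I) :
    ∃ x : Set A, IsPrimeFilter x ∧ (F : Set A) ⊆ x ∧ Disjoint x I := by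
  obtain ⟨J, hJ, hIJ, hFJ⟩ := DistribLattice.prime_ideal_of_disjoint_filter_ideal hFI
  exact ⟨_, hJ.isPrimeFilter_compl, hFJ.subset_compl_right,
    disjoint_compl_left.mono_right (Ideal.coe_subset_coe.mpr hIJ)⟩

lemma exists_isPrimeFilter_mem_notMem_of_himp_notMem {z : Set A} (hz : IsPFilter z) {c d : A}
    (h : c ⇨ d ∉ z) : ∃ w : Set A, IsPrimeFilter w ∧ z ⊆ w ∧ c ∈ w ∧ d ∉ w := by
  set Z := hz.toPFilter
  have hF : IsPFilter {e | c ⇨ e ∈ Z} :=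
    isPFilter_of_inf_mem (by simp) (fun a b ha hab => Z.mem_of_le (himp_le_himp_left hab) ha)
      (fun a b ha hb => by rw [Set.mem_ofPred_eq, himp_inf_distrib]; exact Z.inf_mem ha hb)
  obtain ⟨w, hw, hFw, hwd⟩ := exists_isPrimeFilter_of_disjoint (F := hF.toPFilter)
    (I := Ideal.principal d) (Set.disjoint_left.mpr fun e he hed =>
      h (Z.mem_of_le (himp_le_himp_left hed) he))
  exact ⟨w, hw, fun e he => hFw (Z.mem_of_le le_himp he), hFw (show c ⇨ c ∈ Z by simp),
    fun hd => Set.disjoint_left.mp hwd hd (le_refl d)⟩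

lemma GaloisConnection.exists_isPrimeFilter_mem_subset_preimage {B : Type*} [HeytingAlgebra B]
    {l : A → B} {u : B → A} (gc : GaloisConnection l u) {w : Set B} (hw : IsPrimeFilter w)
    {a : A} (ha : l a ∈ w) : ∃ x : Set A, IsPrimeFilter x ∧ a ∈ x ∧ x ⊆ l ⁻¹' w := by
  obtain ⟨-, hbot, hup, -, hprime⟩ := hw
  have hI : IsIdeal {e | l e ∉ w} :=
    isIdeal_of_sup_mem (by simpa [gc.l_bot])
      (fun e f hf hef he => hf (hup _ _ he (gc.monotone_l hef)))
      (fun e f he hf hef => (hprime _ _ (gc.l_sup ▸ hef)).elim he hf)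
  obtain ⟨x, hx, hax, hxI⟩ := exists_isPrimeFilter_of_disjoint (F := PFilter.principal a)
    (I := hI.toIdeal) (Set.disjoint_left.mpr fun e hae he => he (hup _ _ ha (gc.monotone_l hae)))
  exact ⟨x, hx, hax le_rfl, fun c hc => by_contra fun hlc => Set.disjoint_left.mp hxI hc hlc⟩

end PrimeFilter

section Archival

variable {A : Type*} [HeytingAlgebra A] {box dia : A → A} {C : Set (Set A)}

def IsArchival (dia : A → A) (C : Set (Set A)) : Prop :=
  ∀ z x : Set A, IsPrimeFilter z → IsPrimeFilter x → (∀ a ∈ x, dia a ∈ z) → x ∉ C → z ∈ C →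
    ∃ y ∈ C, x ⊆ y ∧ ∀ a ∈ y, dia a ∈ z

lemma IsArchival.exists_mem_subset_preimage (harc : IsArchival dia C)
    (gc : GaloisConnection dia box) {w : Set A} (hw : IsPrimeFilter w) (hwC : w ∈ C) {a : A}
    (ha : dia a ∈ w) : ∃ y ∈ C, a ∈ y ∧ y ⊆ dia ⁻¹' w := by
  obtain ⟨x, hx, hax, hxw⟩ := gc.exists_isPrimeFilter_mem_subset_preimage hw ha
  by_cases hxC : x ∈ C
  · exact ⟨x, hxC, hax, hxw⟩
  · obtain ⟨y, hyC, hxy, hyw⟩ := harc w x hw hx hxw hxC hwC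
    exact ⟨y, hyC, hxy hax, hyw⟩

lemma IsArchival.himp_mem (harc : IsArchival dia C) (gc : GaloisConnection dia box)
    (hmem : ∀ x ∈ C, IsPrimeFilter x) (hup : ∀ x ∈ C, ∀ y : Set A, IsPrimeFilter y → x ⊆ y → y ∈ C)
    {a b : A} (hab : ∀ x ∈ C, a ⇨ b ∈ x) {z : Set A} (hz : z ∈ C) : dia a ⇨ dia b ∈ z := by
  by_contra h
  obtain ⟨w, hw, hzw, haw, hbw⟩ :=
    exists_isPrimeFilter_mem_notMem_of_himp_notMem (hmem z hz).isPFilter h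
  obtain ⟨y, hyC, hay, hyw⟩ := harc.exists_mem_subset_preimage gc hw (hup z hz w hw hzw) haw
  obtain ⟨-, -, hyup, hyinf, -⟩ := hmem y hyC
  exact hbw (hyw (hyup _ _ (hyinf _ _ hay (hab y hyC)) inf_himp_le))

lemma isDiaFilter_sInter (hmem : ∀ x ∈ C, IsPrimeFilter x)
    (hdia : ∀ a b : A, (∀ x ∈ C, a ⇨ b ∈ x) → ∀ x ∈ C, dia a ⇨ dia b ∈ x) :
    IsDiaFilter dia (⋂₀ C) :=
  ⟨fun x hx => (hmem x hx).1,
    fun a b ha hab x hx => (hmem x hx).2.2.1 a b (ha x hx) hab,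
    fun a b ha hb x hx => (hmem x hx).2.2.2.1 a b (ha x hx) (hb x hx),
    fun a b hab => Set.mem_sInter.mpr (hdia a b (Set.mem_sInter.mp hab))⟩

end Archival

theorem stmt7_general {A : Type*} [HeytingAlgebra A] (box dia : A → A)
    (hadj : ∀ a b : A, dia a ≤ b ↔ a ≤ box b)
    (C : Set (Set A))
    (hmem : ∀ x ∈ C, IsPrimeFilter x)
    (hup : ∀ x ∈ C, ∀ y : Set A, IsPrimeFilter y → x ⊆ y → y ∈ C)
    (harc : ∀ z x : Set A, IsPrimeFilter z → IsPrimeFilter x →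
      (∀ a ∈ x, dia a ∈ z) → x ∉ C → z ∈ C →
      ∃ y ∈ C, x ⊆ y ∧ ∀ a ∈ y, dia a ∈ z) :
    (∀ a b : A, (∀ x ∈ C, a ⇨ b ∈ x) → ∀ x ∈ C, dia a ⇨ dia b ∈ x) ∧
    IsDiaFilter dia (⋂₀ C) := by
  have key a b (hab : ∀ x ∈ C, a ⇨ b ∈ x) x (hx : x ∈ C) : dia a ⇨ dia b ∈ x :=
    IsArchival.himp_mem harc hadj hmem hup hab hx
  exact ⟨key, isDiaFilter_sInter hmem key⟩

/-- The intersection of an archival upward-closed set of prime filters is a ◆-filter. -/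
theorem stmt7 {A : Type*} [HeytingAlgebra A] (box dia : A → A)
    (hbox_meet : ∀ a b : A, box (a ⊓ b) = box a ⊓ box b)
    (hbox_incr : ∀ a : A, a ≤ box a)
    (hbox_front : ∀ a b : A, box a ≤ b ⊔ (b ⇨ a))
    (hadj : ∀ a b : A, dia a ≤ b ↔ a ≤ box b)
    (C : Set (Set A))
    (hmem : ∀ x ∈ C, IsPrimeFilter x)
    (hup : ∀ x ∈ C, ∀ y : Set A, IsPrimeFilter y → x ⊆ y → y ∈ C)
    (harc : ∀ z x : Set A, IsPrimeFilter z → IsPrimeFilter x →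
      (∀ a ∈ x, dia a ∈ z) → x ∉ C → z ∈ C →
      ∃ y ∈ C, x ⊆ y ∧ ∀ a ∈ y, dia a ∈ z) :
    (∀ a b : A, (∀ x ∈ C, a ⇨ b ∈ x) → ∀ x ∈ C, dia a ⇨ dia b ∈ x) ∧
    IsDiaFilter dia (⋂₀ C) :=
  stmt7_general box dia hadj C hmem hup harc
end

section
/- Let A be a temporal Heyting algebra. The map θ ↦ {a ∈ A : a θ 1} is an order isomorphism from the poset of congruences of A (ordered by inclusion of relations) onto the poset of ◆-filters of A (ordered by inclusion), with inverse F ↦ {(a, b) : (a ⇨ b) ⊓ (b ⇨ a) ∈ F}. -/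
section Aux

variable {A : Type*} [HeytingAlgebra A] {box dia : A → A}

/-- `E a b` expresses "a ↔ b" inside the algebra. -/
private def E (a b : A) : A := (a ⇨ b) ⊓ (b ⇨ a)

private lemma E_comm (a b : A) : E a b = E b a := inf_comm _ _

private lemma E_le_left (a b : A) : E a b ≤ a ⇨ b := inf_le_left
private lemma E_le_right (a b : A) : E a b ≤ b ⇨ a := inf_le_right

private lemma E_self (a : A) : E a a = ⊤ := by simp [E]

private lemma E_top (a : A) : E a ⊤ = a := by simp [E]

private lemma himp_trans' (a b c : A) : (a ⇨ b) ⊓ (b ⇨ c) ≤ a ⇨ c := by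
  rw [le_himp_iff]
  refine le_trans (le_inf (inf_le_left.trans inf_le_right)
    (le_trans (le_inf (inf_le_left.trans inf_le_left) inf_le_right) himp_inf_le)) himp_inf_le

private lemma E_trans (a b c : A) : E a b ⊓ E b c ≤ E a c := by
  refine le_inf ?_ ?_
  · exact le_trans (inf_le_inf inf_le_left inf_le_left) (himp_trans' a b c)
  · exact le_trans (inf_le_inf inf_le_right inf_le_right)
      ((inf_comm _ _).trans_le (himp_trans' c b a))

private lemma himp_inf_right' (a b c : A) : a ⇨ b ≤ (a ⊓ c) ⇨ (b ⊓ c) := by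
  rw [le_himp_iff]
  refine le_inf ?_ (inf_le_right.trans inf_le_right)
  exact le_trans (le_inf inf_le_left (inf_le_right.trans inf_le_left)) himp_inf_le

private lemma himp_sup_right' (a b c : A) : a ⇨ b ≤ (a ⊔ c) ⇨ (b ⊔ c) := by
  rw [le_himp_iff, inf_sup_left]
  exact sup_le_sup himp_inf_le inf_le_right

private lemma E_inf_right (a b c : A) : E a b ≤ E (a ⊓ c) (b ⊓ c) :=
  le_inf (inf_le_left.trans (himp_inf_right' a b c))
    (inf_le_right.trans (himp_inf_right' b a c))

private lemma E_sup_right (a b c : A) : E a b ≤ E (a ⊔ c) (b ⊔ c) :=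
  le_inf (inf_le_left.trans (himp_sup_right' a b c))
    (inf_le_right.trans (himp_sup_right' b a c))

private lemma E_himp_right (a b c : A) : E a b ≤ E (a ⇨ c) (b ⇨ c) :=
  le_inf (inf_le_right.trans (le_himp_iff.mpr (himp_trans' b a c)))
    (inf_le_left.trans (le_himp_iff.mpr (himp_trans' a b c)))

private lemma E_himp_left (a b c : A) : E a b ≤ E (c ⇨ a) (c ⇨ b) := by
  refine le_inf (inf_le_left.trans ?_) (inf_le_right.trans ?_) <;>
  · rw [le_himp_iff, le_himp_iff]
    exact le_trans (le_inf (inf_le_left.trans inf_le_left)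
      (le_trans (le_inf (inf_le_left.trans inf_le_right) inf_le_right) himp_inf_le)) himp_inf_le

section Box
variable (hbox_meet : ∀ a b : A, box (a ⊓ b) = box a ⊓ box b)
  (hbox_incr : ∀ a : A, a ≤ box a)
  (hadj : ∀ a b : A, dia a ≤ b ↔ a ≤ box b)

include hbox_meet in
private lemma box_mono' {a b : A} (h : a ≤ b) : box a ≤ box b := by
  have h2 : box (a ⊓ b) = box a ⊓ box b := hbox_meet a b
  rw [inf_eq_left.mpr h] at h2
  rw [h2]
  exact inf_le_right

include hbox_meet hbox_incr in
private lemma himp_le_box_himp (a b : A) : a ⇨ b ≤ box a ⇨ box b := by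
  rw [le_himp_iff]
  calc (a ⇨ b) ⊓ box a ≤ box (a ⇨ b) ⊓ box a := inf_le_inf_right _ (hbox_incr _)
    _ = box ((a ⇨ b) ⊓ a) := (hbox_meet _ _).symm
    _ ≤ box b := box_mono' hbox_meet himp_inf_le

include hbox_meet hbox_incr in
private lemma E_box (a b : A) : E a b ≤ E (box a) (box b) :=
  le_inf (inf_le_left.trans (himp_le_box_himp hbox_meet hbox_incr a b))
    (inf_le_right.trans (himp_le_box_himp hbox_meet hbox_incr b a))

include hadj in
private lemma dia_mono' {a b : A} (h : a ≤ b) : dia a ≤ dia b :=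
  (hadj _ _).mpr (h.trans ((hadj _ _).mp le_rfl))

end Box

/-- For a congruence, `θ a b ↔ θ (E a b) ⊤`. -/
private lemma cong_iff_E {θ : A → A → Prop} (hθ : IsCong box dia θ) (a b : A) :
    θ a b ↔ θ (E a b) ⊤ := by
  obtain ⟨heq, hinf, hsup, himp, hbox, hdia⟩ := hθ
  constructor
  · intro h
    have h1 : θ (a ⇨ b) ⊤ := by
      have := himp a b b b h (heq.refl b)
      rwa [himp_self] at this
    have h2 : θ (b ⇨ a) ⊤ := by
      have := himp b a a a (heq.symm h) (heq.refl a)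
      rwa [himp_self] at this
    have h3 := hinf _ _ _ _ h1 h2
    rwa [inf_idem] at h3
  · intro h
    have key : ∀ x y : A, θ (E x y) ⊤ → θ (x ⊓ y) x := by
      intro x y hxy
      have h4 := hinf x x _ _ (heq.refl x) hxy
      rw [inf_top_eq] at h4
      have hx : x ⊓ E x y = x ⊓ y := by
        rw [E, ← inf_assoc, inf_himp]
        exact inf_eq_left.mpr (inf_le_left.trans le_himp)
      rwa [hx] at h4
    have h1 : θ (a ⊓ b) a := key a b h
    have h2 : θ (b ⊓ a) b := key b a (by rwa [← E_comm])
    rw [inf_comm] at h2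
    exact heq.trans (heq.symm h1) h2

/-- From a congruence to a ◆-filter. -/
private lemma filter_of_cong
    (hadj : ∀ a b : A, dia a ≤ b ↔ a ≤ box b)
    {θ : A → A → Prop} (hθ : IsCong box dia θ) :
    IsDiaFilter dia {a : A | θ a ⊤} := by
  obtain ⟨heq, hinf, hsup, himp, hbox, hdia⟩ := hθ
  refine ⟨heq.refl ⊤, ?_, ?_, ?_⟩
  · intro a b ha hab
    have h1 := hsup a ⊤ b b ha (heq.refl b)
    rwa [sup_eq_right.mpr hab, top_sup_eq] at h1
  · intro a b ha hb
    have h1 := hinf a ⊤ b ⊤ ha hb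
    rwa [inf_top_eq] at h1
  · intro a b hab
    have h1 : θ (a ⊓ b) a := by
      have h0 := hinf a a (a ⇨ b) ⊤ (heq.refl a) hab
      rwa [inf_himp, inf_top_eq] at h0
    have h2 : θ (dia (a ⊓ b)) (dia a) := hdia _ _ h1
    have h3 : θ (dia (a ⊓ b) ⇨ dia b) (dia a ⇨ dia b) :=
      himp _ _ _ _ h2 (heq.refl (dia b))
    have h4 : dia (a ⊓ b) ⇨ dia b = ⊤ :=
      himp_eq_top_iff.mpr (dia_mono' hadj inf_le_right)
    rw [h4] at h3
    exact heq.symm h3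

/-- From a ◆-filter to a congruence. -/
private lemma cong_of_filter
    (hbox_meet : ∀ a b : A, box (a ⊓ b) = box a ⊓ box b)
    (hbox_incr : ∀ a : A, a ≤ box a)
    {F : Set A} (hF : IsDiaFilter dia F) :
    IsCong box dia (fun a b : A => E a b ∈ F) := by
  obtain ⟨htop, hup, hmeet, hdia⟩ := hF
  have up : ∀ {a b : A}, a ∈ F → a ≤ b → b ∈ F := fun h h' => hup _ _ h h'
  have refl : ∀ a : A, E a a ∈ F := fun a => by rw [E_self]; exact htop
  have symm : ∀ {a b : A}, E a b ∈ F → E b a ∈ F := by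
    intro a b h; rwa [E_comm] at h
  have trans : ∀ {a b c : A}, E a b ∈ F → E b c ∈ F → E a c ∈ F := by
    intro a b c h1 h2
    exact up (hmeet _ _ h1 h2) (E_trans a b c)
  refine ⟨⟨refl, symm, trans⟩, ?_, ?_, ?_, ?_, ?_⟩
  · intro a b c d hab hcd
    refine trans (up hab (E_inf_right a b c)) ?_
    rw [inf_comm b c, inf_comm b d]
    exact up hcd (E_inf_right c d b)
  · intro a b c d hab hcd
    refine trans (up hab (E_sup_right a b c)) ?_
    rw [sup_comm b c, sup_comm b d]
    exact up hcd (E_sup_right c d b)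
  · intro a b c d hab hcd
    exact trans (up hab (E_himp_right a b c)) (up hcd (E_himp_left c d b))
  · intro a b h
    exact up h (E_box hbox_meet hbox_incr a b)
  · intro a b h
    exact hmeet _ _ (hdia a b (up h (E_le_left a b))) (hdia b a (up h (E_le_right a b)))

end Aux

/-- Congruences of a temporal Heyting algebra are order-isomorphic to its ◆-filters,
via `θ ↦ {a | a θ ⊤}` with inverse `F ↦ {(a,b) | (a ⇨ b) ⊓ (b ⇨ a) ∈ F}`. -/
theorem stmt8 {A : Type*} [HeytingAlgebra A] (box dia : A → A)
    (hbox_meet : ∀ a b : A, box (a ⊓ b) = box a ⊓ box b)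
    (hbox_incr : ∀ a : A, a ≤ box a)
    (hbox_front : ∀ a b : A, box a ≤ b ⊔ (b ⇨ a))
    (hadj : ∀ a b : A, dia a ≤ b ↔ a ≤ box b) :
    ∃ e : {θ : A → A → Prop // IsCong box dia θ} ≃o {F : Set A // IsDiaFilter dia F},
      (∀ θ : {θ : A → A → Prop // IsCong box dia θ}, (e θ).1 = {a : A | θ.1 a ⊤}) ∧
      (∀ F : {F : Set A // IsDiaFilter dia F},
        (e.symm F).1 = fun a b : A => (a ⇨ b) ⊓ (b ⇨ a) ∈ F.1) := by
  refine ⟨{ toFun := fun θ => ⟨{a : A | θ.1 a ⊤}, filter_of_cong hadj θ.2⟩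
            invFun := fun F => ⟨fun a b : A => (a ⇨ b) ⊓ (b ⇨ a) ∈ F.1,
              cong_of_filter hbox_meet hbox_incr F.2⟩
            left_inv := ?_
            right_inv := ?_
            map_rel_iff' := ?_ }, fun θ => rfl, fun F => rfl⟩
  · intro θ
    apply Subtype.ext
    funext a b
    exact propext (cong_iff_E θ.2 a b).symm
  · intro F
    apply Subtype.ext
    ext a
    show (a ⇨ ⊤) ⊓ (⊤ ⇨ a) ∈ F.1 ↔ a ∈ F.1
    rw [show (a ⇨ ⊤) ⊓ (⊤ ⇨ a) = a from E_top a]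
  · intro θ θ'
    constructor
    · intro h a b hab
      have h1 : θ'.1 ((a ⇨ b) ⊓ (b ⇨ a)) ⊤ := h ((cong_iff_E θ.2 a b).mp hab)
      exact (cong_iff_E θ'.2 a b).mpr h1
    · intro h a ha
      exact h a ⊤ ha
end

section
/- Let A be a temporal Heyting algebra and a ∈ A. Then a is ◆-compatible if and only if the principal filter ↑a = {b ∈ A : a ≤ b} is a ◆-filter of A. -/
/-- A ◆-compatible element of a temporal Heyting algebra. -/
def DiaCompat {A : Type*} [HeytingAlgebra A] (dia : A → A) (a : A) : Prop :=
  ∀ b : A, a ⊓ dia b ≤ dia (a ⊓ b)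

/-- `a` is ◆-compatible iff the principal filter `↑a` is a ◆-filter. -/
theorem stmt9 {A : Type*} [HeytingAlgebra A] (box dia : A → A)
    (hbox_meet : ∀ a b : A, box (a ⊓ b) = box a ⊓ box b)
    (hbox_incr : ∀ a : A, a ≤ box a)
    (hbox_front : ∀ a b : A, box a ≤ b ⊔ (b ⇨ a))
    (hadj : ∀ a b : A, dia a ≤ b ↔ a ≤ box b)
    (a : A) :
    DiaCompat dia a ↔ IsDiaFilter dia {b : A | a ≤ b} := by
  have hmono : ∀ b c : A, b ≤ c → dia b ≤ dia c := fun b c h =>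
    (hadj b (dia c)).2 (h.trans ((hadj c (dia c)).1 le_rfl))
  constructor
  · intro hc
    refine ⟨le_top, fun b c hb hbc => hb.trans hbc, fun b c hb hc' => le_inf hb hc',
      fun b c h => ?_⟩
    rw [Set.mem_setOf_eq, le_himp_iff]
    exact (hc b).trans (hmono _ _ (le_himp_iff.mp h))
  · intro ⟨_, _, _, h4⟩ b
    have h := h4 b (a ⊓ b) (by simp [le_himp_iff, inf_comm])
    rw [Set.mem_setOf_eq, le_himp_iff] at h
    exact h
end

section
/- Let A be a finite temporal Heyting algebra. Then a subset F ⊆ A is a ◆-filter if and only if F = ↑a for some ◆-compatible element a ∈ A; moreover, the map F ↦ ⊓F is an order-reversing bijection from the ◆-filters of A (ordered by inclusion) onto the ◆-compatible elements of A (ordered by ≤), with inverse a ↦ ↑a. -/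
theorem InfClosed.exists_isLeast_of_finite {α : Type*} [SemilatticeInf α] {s : Set α}
    (hs : InfClosed s) (hfin : s.Finite) (hne : s.Nonempty) : ∃ a, IsLeast s a := by
  have hne' : hfin.toFinset.Nonempty := hfin.toFinset_nonempty.2 hne
  refine ⟨hfin.toFinset.inf' hne' id, ?_, fun x hx => Finset.inf'_le id (hfin.mem_toFinset.2 hx)⟩
  exact hs.finsetInf'_mem hne' fun x hx => hfin.mem_toFinset.1 hx

namespace IsDiaFilter

variable {A : Type*} [HeytingAlgebra A] {dia : A → A} {F : Set A} {a : A}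

theorem eq_Ici_of_isLeast (hF : IsDiaFilter dia F) (ha : IsLeast F a) : F = Set.Ici a :=
  Set.Subset.antisymm (fun _ hx => ha.2 hx) fun x hx => hF.2.1 a x ha.1 hx

theorem exists_isLeast [Finite A] (hF : IsDiaFilter dia F) : ∃ a, IsLeast F a :=
  InfClosed.exists_isLeast_of_finite (fun x hx y hy => hF.2.2.1 x y hx hy) (Set.toFinite F)
    ⟨⊤, hF.1⟩

theorem diaCompat_of_isLeast (hF : IsDiaFilter dia F) (ha : IsLeast F a) : DiaCompat dia a := by
  intro b
  have hmem : b ⇨ a ⊓ b ∈ F := hF.2.1 a _ ha.1 (le_himp_iff.2 le_rfl)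
  exact le_himp_iff.1 (ha.2 (hF.2.2.2 _ _ hmem))

end IsDiaFilter

theorem isDiaFilter_Ici {A : Type*} [HeytingAlgebra A] {dia : A → A} (hdia : Monotone dia)
    {a : A} (ha : DiaCompat dia a) : IsDiaFilter dia (Set.Ici a) := by
  refine ⟨le_top, fun x y hx hxy => hx.trans hxy, fun x y hx hy => le_inf hx hy,
    fun x y hxy => le_himp_iff.2 ?_⟩
  exact (ha x).trans (hdia (le_himp_iff.1 hxy))

theorem stmt10_general {A : Type*} [HeytingAlgebra A] [Finite A] (box dia : A → A)
    (hadj : ∀ a b : A, dia a ≤ b ↔ a ≤ box b) :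
    (∀ F : Set A, IsDiaFilter dia F ↔ ∃ a : A, DiaCompat dia a ∧ F = Set.Ici a) ∧
    (∀ F : Set A, IsDiaFilter dia F →
      ∃ a : A, IsLeast F a ∧ DiaCompat dia a ∧ F = Set.Ici a) ∧
    (∀ a : A, DiaCompat dia a → IsDiaFilter dia (Set.Ici a)) ∧
    (∀ F G : Set A, IsDiaFilter dia F → IsDiaFilter dia G →
      ∀ a b : A, IsLeast F a → IsLeast G b → (F ⊆ G ↔ b ≤ a)) := by
  have hdia : Monotone dia := GaloisConnection.monotone_l (u := box) hadj
  have principal : ∀ F : Set A, IsDiaFilter dia F →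
      ∃ a : A, IsLeast F a ∧ DiaCompat dia a ∧ F = Set.Ici a := by
    intro F hF
    obtain ⟨a, ha⟩ := hF.exists_isLeast
    exact ⟨a, ha, hF.diaCompat_of_isLeast ha, hF.eq_Ici_of_isLeast ha⟩
  refine ⟨fun F => ⟨fun hF => ?_, ?_⟩, principal, fun a => isDiaFilter_Ici hdia, ?_⟩
  · obtain ⟨a, -, hcompat, rfl⟩ := principal F hF
    exact ⟨a, hcompat, rfl⟩
  · rintro ⟨a, hcompat, rfl⟩
    exact isDiaFilter_Ici hdia hcompat
  · intro F G hF hG a b ha hb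
    rw [hF.eq_Ici_of_isLeast ha, hG.eq_Ici_of_isLeast hb, Set.Ici_subset_Ici]

/-- In a finite temporal Heyting algebra, the ◆-filters are exactly the principal
filters of ◆-compatible elements, and `F ↦ ⊓F` is an order-reversing bijection
from ◆-filters onto ◆-compatible elements with inverse `a ↦ ↑a`. -/
theorem stmt10 {A : Type*} [HeytingAlgebra A] [Finite A] (box dia : A → A)
    (hbox_meet : ∀ a b : A, box (a ⊓ b) = box a ⊓ box b)
    (hbox_incr : ∀ a : A, a ≤ box a)
    (hbox_front : ∀ a b : A, box a ≤ b ⊔ (b ⇨ a))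
    (hadj : ∀ a b : A, dia a ≤ b ↔ a ≤ box b) :
    (∀ F : Set A, IsDiaFilter dia F ↔ ∃ a : A, DiaCompat dia a ∧ F = Set.Ici a) ∧
    (∀ F : Set A, IsDiaFilter dia F →
      ∃ a : A, IsLeast F a ∧ DiaCompat dia a ∧ F = Set.Ici a) ∧
    (∀ a : A, DiaCompat dia a → IsDiaFilter dia (Set.Ici a)) ∧
    (∀ F G : Set A, IsDiaFilter dia F → IsDiaFilter dia G →
      ∀ a b : A, IsLeast F a → IsLeast G b → (F ⊆ G ↔ b ≤ a)) :=
  stmt10_general box dia hadj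
end

section
/- Let X be a finite temporal transit, S ⊆ X an archival subset, x ∈ S, and suppose x B w. Then w ∈ S. -/
/-- A subset `S` of a temporal transit is archival. -/
def Archival {X : Type*} [PartialOrder X] (R : X → X → Prop) (S : Set X) : Prop :=
  ∀ z x : X, R x z → x ∉ S → z ∈ S → ∃ y ∈ S, x ≤ y ∧ R y z

/-- `x B w` iff `w ≤ x` and no point strictly between `w` and `x`
(inclusive of `x`) is reflexive. -/
def Brel {X : Type*} [PartialOrder X] (R : X → X → Prop) (x w : X) : Prop :=
  w ≤ x ∧ ∀ y : X, w < y → y ≤ x → ¬ R y y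

/-- `Z` is the reflexive-transitive closure of "descend via `B`, then go up via `≤`". -/
def Zrel {X : Type*} [PartialOrder X] (R : X → X → Prop) : X → X → Prop :=
  Relation.ReflTransGen (fun x z : X => ∃ w : X, Brel R x w ∧ w ≤ z)

/-- Archival subsets are closed under `B`. -/
theorem stmt12 {X : Type*} [PartialOrder X] [Finite X] (R : X → X → Prop)
    (htr : ∀ x y : X, x ≤ y ↔ R x y ∨ x = y)
    (S : Set X) (hS : Archival R S)
    (x w : X) (hx : x ∈ S) (hB : Brel R x w) :
    w ∈ S := by
  have wf : WellFoundedLT X := Finite.to_wellFoundedLT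
  refine wf.wf.induction
    (C := fun x => x ∈ S → w ≤ x → (∀ y, w < y → y ≤ x → ¬ R y y) → w ∈ S)
    x ?_ hx hB.1 hB.2
  intro x ih hx hwx hno
  by_cases hwS : w ∈ S
  · exact hwS
  rcases eq_or_lt_of_le hwx with rfl | hlt
  · exact hx
  have hR : R w x := ((htr w x).mp hwx).resolve_right hlt.ne
  obtain ⟨y, hyS, hwy, hRyx⟩ := hS x w hR hwS hx
  rcases eq_or_lt_of_le hwy with rfl | hwylt
  · exact hyS
  have hyx : y ≤ x := (htr y x).mpr (Or.inl hRyx)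
  have hyne : y ≠ x := by
    rintro rfl
    exact hno y hwylt le_rfl hRyx
  exact ih y (lt_of_le_of_ne hyx hyne) hyS hwy
    (fun t ht htx => hno t ht (htx.trans hyx))
end

section
/- Let X be a finite temporal transit and U ⊆ X an archival upward-closed subset. If w ∈ U and w Z z, then z ∈ U. -/
theorem brel_mem {X : Type*} [PartialOrder X] [Finite X] (R : X → X → Prop)
    (htr : ∀ x y : X, x ≤ y ↔ R x y ∨ x = y)
    (U : Set X) (hUarc : Archival R U)
    (x w : X) (hB : Brel R x w) (hx : x ∈ U) : w ∈ U := by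
  by_contra hw
  obtain ⟨hwx, hnr⟩ := hB
  have : WellFoundedLT X := Finite.to_wellFoundedLT
  obtain ⟨y, ⟨hyU, hwy, hyx⟩, hmin⟩ :=
    this.wf.has_min {y | y ∈ U ∧ w ≤ y ∧ y ≤ x} ⟨x, hx, hwx, le_refl x⟩
  have hwylt : w < y := lt_of_le_of_ne hwy (by rintro rfl; exact hw hyU)
  have hRwy : R w y := ((htr w y).1 hwy).resolve_right (by rintro rfl; exact hw hyU)
  obtain ⟨y', hy'U, hwy', hRy'y⟩ := hUarc y w hRwy hw hyU
  have hy'y : y' ≤ y := (htr y' y).2 (Or.inl hRy'y)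
  have hne : y' ≠ y := by
    rintro rfl
    exact hnr y' hwylt hyx hRy'y
  exact hmin y' ⟨hy'U, hwy', le_trans hy'y hyx⟩ (lt_of_le_of_ne hy'y hne)

/-- Archival upward-closed subsets are closed under `Z`. -/
theorem stmt13 {X : Type*} [PartialOrder X] [Finite X] (R : X → X → Prop)
    (htr : ∀ x y : X, x ≤ y ↔ R x y ∨ x = y)
    (U : Set X) (hUarc : Archival R U)
    (hUup : ∀ a b : X, a ∈ U → a ≤ b → b ∈ U)
    (w z : X) (hw : w ∈ U) (hZ : Zrel R w z) :
    z ∈ U := by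
  induction hZ with
  | refl => exact hw
  | tail _ hstep ih =>
    obtain ⟨v, hB, hvz⟩ := hstep
    exact hUup v _ (brel_mem R htr U hUarc _ v hB ih) hvz
end

section
/- Let X be a finite temporal transit and S ⊆ X. Then Z[S] := {y ∈ X : ∃ x ∈ S, x Z y} is an archival upward-closed subset of X. -/
/-!
`Z[S]` is closed under single `Z`-steps, and `x B x` always holds, so it is upward closed.
For archivality, given `x R▷ z` with `z ∈ Z[S]` and `x ∉ Z[S]`, take `y` maximal in `[x, z]`
among `x` and the reflexive points. Then `z B y`, so `y ∈ Z[S]`; hence `y ≠ x`, so `y` is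
reflexive, and `y R▷ z` follows from `y ≤ z` (when `y = z`, from reflexivity).
-/

section

variable {X : Type*} [PartialOrder X] (R : X → X → Prop)

def zImage (S : Set X) : Set X := {y : X | ∃ x ∈ S, Zrel R x y}

theorem Brel.refl (x : X) : Brel R x x :=
  ⟨le_rfl, fun _ hxy hyx _ => (hxy.trans_le hyx).false⟩

theorem exists_brel_of_le [Finite X] {x z : X} (hxz : x ≤ z) :
    ∃ y, x ≤ y ∧ Brel R z y ∧ (y = x ∨ R y y) := by
  obtain ⟨y, hxy, hmax⟩ := Finite.exists_le_maximal
    (p := fun y => x ≤ y ∧ y ≤ z ∧ (y = x ∨ R y y)) ⟨le_rfl, hxz, Or.inl rfl⟩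
  refine ⟨y, hxy, ⟨hmax.prop.2.1, fun v hyv hvz hv => ?_⟩, hmax.prop.2.2⟩
  exact hmax.not_prop_of_gt hyv ⟨hxy.trans hyv.le, hvz, Or.inr hv⟩

variable {R}

theorem mem_zImage_of_brel_of_le {S : Set X} {a w b : X} (ha : a ∈ zImage R S)
    (haw : Brel R a w) (hwb : w ≤ b) : b ∈ zImage R S :=
  let ⟨s, hs, hsa⟩ := ha
  ⟨s, hs, hsa.tail ⟨w, haw, hwb⟩⟩

theorem isUpperSet_zImage (S : Set X) : IsUpperSet (zImage R S) :=
  fun a _ hab ha => mem_zImage_of_brel_of_le ha (Brel.refl R a) hab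

theorem archival_zImage [Finite X] (htr : ∀ x y : X, x ≤ y ↔ R x y ∨ x = y) (S : Set X) :
    Archival R (zImage R S) := by
  intro z x hxz hx hz
  obtain ⟨y, hxy, hzy, hy⟩ := exists_brel_of_le R ((htr x z).2 (Or.inl hxz))
  have hyS : y ∈ zImage R S := mem_zImage_of_brel_of_le hz hzy le_rfl
  have hRyy : R y y := hy.resolve_left (by rintro rfl; exact hx hyS)
  refine ⟨y, hyS, hxy, ?_⟩
  rcases (htr y z).1 hzy.1 with hyz | rfl
  exacts [hyz, hRyy]

end

/-- The `Z`-image of any subset is an archival upward-closed subset. -/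
theorem stmt14 {X : Type*} [PartialOrder X] [Finite X] (R : X → X → Prop)
    (htr : ∀ x y : X, x ≤ y ↔ R x y ∨ x = y)
    (S : Set X) :
    Archival R {y : X | ∃ x ∈ S, Zrel R x y} ∧
    (∀ a b : X, a ∈ {y : X | ∃ x ∈ S, Zrel R x y} → a ≤ b →
      b ∈ {y : X | ∃ x ∈ S, Zrel R x y}) :=
  ⟨archival_zImage htr S, fun _ _ ha hab => isUpperSet_zImage S hab ha⟩
end

section
/- Let X be a finite temporal transit and x, y ∈ X. Then x Z y if and only if y belongs to every archival upward-closed subset of X that contains x. -/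
/-- `x Z y` iff `y` belongs to every archival upward-closed subset containing `x`. -/
theorem stmt15 {X : Type*} [PartialOrder X] [Finite X] (R : X → X → Prop)
    (htr : ∀ x y : X, x ≤ y ↔ R x y ∨ x = y)
    (x y : X) :
    Zrel R x y ↔ ∀ U : Set X, Archival R U →
      (∀ a b : X, a ∈ U → a ≤ b → b ∈ U) → x ∈ U → y ∈ U := by
  constructor
  · -- forward
    intro hZ U hA hup hxU
    -- key: Brel descent stays in U
    have key : ∀ a w : X, Brel R a w → a ∈ U → w ∈ U := by
      intro a w hB haU
      obtain ⟨hwa, hno⟩ := hB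
      have H : ∀ v : X, w ≤ v → v ≤ a → v ∈ U → w ∈ U := by
        intro v
        induction v using WellFoundedLT.induction with
        | ind v ih =>
          intro hwv hva hv
          rcases eq_or_lt_of_le hwv with rfl | hlt
          · exact hv
          · by_contra hw
            have hR : R w v := ((htr w v).1 hwv).resolve_right (fun h => hlt.ne h)
            obtain ⟨t, htU, hwt, hRt⟩ := hA v w hR hw hv
            have htv : t ≤ v := (htr t v).2 (Or.inl hRt)
            have htlt : t < v := lt_of_le_of_ne htv (by rintro rfl; exact hno t hlt hva hRt)
            exact absurd (ih t htlt hwt (htlt.le.trans hva) htU) hw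
      exact H a hwa le_rfl haU
    induction hZ with
    | refl => exact hxU
    | tail _ hbc ih =>
      obtain ⟨w, hB, hwc⟩ := hbc
      exact hup w _ (key _ w hB ih) hwc
  · -- backward
    intro h
    apply h {u | Zrel R x u}
    · intro z u hR hu hz
      have huz : u ≤ z := (htr u z).2 (Or.inl hR)
      have hult : u < z := lt_of_le_of_ne huz (fun h' => hu (h' ▸ hz))
      by_cases hzz : R z z
      · exact ⟨z, hz, huz, hzz⟩
      · by_cases hP : {v : X | u ≤ v ∧ v < z ∧ R v v}.Nonempty
        · obtain ⟨r, hrP, hrmax⟩ :=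
            (Finite.to_wellFoundedGT (α := X)).wf.has_min _ hP
          have hBzr : Brel R z r := by
            refine ⟨hrP.2.1.le, fun t ht htz hRtt => ?_⟩
            rcases eq_or_lt_of_le htz with rfl | htlt
            · exact hzz hRtt
            · exact hrmax t ⟨hrP.1.trans ht.le, htlt, hRtt⟩ ht
          have hrU : Zrel R x r := hz.tail ⟨r, hBzr, le_rfl⟩
          exact ⟨r, hrU, hrP.1,
            ((htr r z).1 hrP.2.1.le).resolve_right hrP.2.1.ne⟩
        · exfalso
          apply hu
          have hBzu : Brel R z u := by
            refine ⟨huz, fun t ht htz hRtt => ?_⟩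
            rcases eq_or_lt_of_le htz with rfl | htlt
            · exact hzz hRtt
            · exact hP ⟨t, ht.le, htlt, hRtt⟩
          exact hz.tail ⟨u, hBzu, le_rfl⟩
    · intro a b ha hab
      exact Relation.ReflTransGen.tail ha
        ⟨a, ⟨le_rfl, fun t h1 h2 => absurd (h1.trans_le h2) (lt_irrefl a)⟩, hab⟩
    · exact Relation.ReflTransGen.refl
end

section
/- Let A be a nontrivial temporal Heyting algebra (0 ≠ 1). Then the only congruences of A are the diagonal relation and the all-relation if and only if the only ◆-filters of A are {1} and A itself. -/
lemma lT {A : Type*} [HeytingAlgebra A] (a b c : A) : (a⇨b) ⊓ (b⇨c) ≤ a⇨c := by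
  rw [le_himp_iff, inf_comm (a⇨b)]
  exact himp_inf_himp_inf_le

lemma lM {A : Type*} [HeytingAlgebra A] (a b c d : A) :
    (a⇨b) ⊓ (c⇨d) ≤ (a⊓c)⇨(b⊓d) := by
  rw [le_himp_iff]
  refine le_inf ?_ ?_
  · exact (inf_le_inf inf_le_left inf_le_left).trans himp_inf_le
  · exact (inf_le_inf inf_le_right inf_le_right).trans himp_inf_le

lemma lJ {A : Type*} [HeytingAlgebra A] (a b c d : A) :
    (a⇨b) ⊓ (c⇨d) ≤ (a⊔c)⇨(b⊔d) := by
  rw [le_himp_iff, inf_sup_left]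
  refine sup_le ?_ ?_
  · exact le_trans (le_trans (inf_le_inf inf_le_left le_rfl) himp_inf_le) le_sup_left
  · exact le_trans (le_trans (inf_le_inf inf_le_right le_rfl) himp_inf_le) le_sup_right

lemma lH {A : Type*} [HeytingAlgebra A] (a b c d : A) :
    (b⇨a) ⊓ (c⇨d) ≤ (a⇨c)⇨(b⇨d) := by
  rw [le_himp_iff, le_himp_iff]
  calc ((b⇨a) ⊓ (c⇨d)) ⊓ (a⇨c) ⊓ b
      = ((c⇨d) ⊓ (a⇨c)) ⊓ ((b⇨a) ⊓ b) := by ac_rfl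
    _ ≤ ((c⇨d) ⊓ (a⇨c)) ⊓ a := inf_le_inf_left _ himp_inf_le
    _ = (c⇨d) ⊓ ((a⇨c) ⊓ a) := by ac_rfl
    _ ≤ (c⇨d) ⊓ c := inf_le_inf_left _ himp_inf_le
    _ ≤ d := himp_inf_le

/-- A nontrivial temporal Heyting algebra is simple iff its only ◆-filters
are `{⊤}` and the whole algebra. -/
theorem stmt16 {A : Type*} [HeytingAlgebra A] (box dia : A → A)
    (hbox_meet : ∀ a b : A, box (a ⊓ b) = box a ⊓ box b)
    (hbox_incr : ∀ a : A, a ≤ box a)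
    (hbox_front : ∀ a b : A, box a ≤ b ⊔ (b ⇨ a))
    (hadj : ∀ a b : A, dia a ≤ b ↔ a ≤ box b)
    (hnt : (⊥ : A) ≠ ⊤) :
    (∀ θ : A → A → Prop, IsCong box dia θ →
        (θ = fun a b : A => a = b) ∨ (θ = fun _ _ : A => True)) ↔
    (∀ F : Set A, IsDiaFilter dia F → F = {(⊤ : A)} ∨ F = Set.univ) := by
  have hboxmono : ∀ x y : A, x ≤ y → box x ≤ box y := by
    intro x y h
    have : box (x ⊓ y) = box x := by rw [inf_eq_left.2 h]
    rw [hbox_meet] at this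
    exact this ▸ inf_le_right
  have hboximp : ∀ x y : A, x ⇨ y ≤ box x ⇨ box y := by
    intro x y
    have h1 : box (x ⇨ y) ⊓ box x ≤ box y := by
      rw [← hbox_meet]; exact hboxmono _ _ himp_inf_le
    exact (hbox_incr _).trans (le_himp_iff.2 h1)
  have hdiamono : ∀ x y : A, x ≤ y → dia x ≤ dia y := by
    intro x y h
    exact (hadj _ _).2 (h.trans ((hadj y (dia y)).1 le_rfl))
  constructor
  · -- congruences trivial → filters trivial
    intro hcong F hF
    obtain ⟨htop, hup, hmeet, hdia⟩ := hF
    set θ : A → A → Prop := fun a b => a ⇨ b ∈ F ∧ b ⇨ a ∈ F with hθdef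
    have hθc : IsCong box dia θ := by
      refine ⟨⟨?_, ?_, ?_⟩, ?_, ?_, ?_, ?_, ?_⟩
      · intro a; exact ⟨by rw [himp_self]; exact htop, by rw [himp_self]; exact htop⟩
      · intro a b h; exact ⟨h.2, h.1⟩
      · intro a b c h1 h2
        exact ⟨hup _ _ (hmeet _ _ h1.1 h2.1) (lT _ _ _),
               hup _ _ (hmeet _ _ h2.2 h1.2) (lT _ _ _)⟩
      · intro a b c d h1 h2
        exact ⟨hup _ _ (hmeet _ _ h1.1 h2.1) (lM _ _ _ _),
               hup _ _ (hmeet _ _ h1.2 h2.2) (lM _ _ _ _)⟩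
      · intro a b c d h1 h2
        exact ⟨hup _ _ (hmeet _ _ h1.1 h2.1) (lJ _ _ _ _),
               hup _ _ (hmeet _ _ h1.2 h2.2) (lJ _ _ _ _)⟩
      · intro a b c d h1 h2
        exact ⟨hup _ _ (hmeet _ _ h1.2 h2.1) (lH _ _ _ _),
               hup _ _ (hmeet _ _ h1.1 h2.2) (lH _ _ _ _)⟩
      · intro a b h
        exact ⟨hup _ _ h.1 (hboximp _ _), hup _ _ h.2 (hboximp _ _)⟩
      · intro a b h
        exact ⟨hdia _ _ h.1, hdia _ _ h.2⟩
    rcases hcong θ hθc with h | h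
    · left
      ext x
      simp only [Set.mem_singleton_iff]
      constructor
      · intro hx
        have hx' : θ x ⊤ := ⟨by rw [himp_top]; exact htop, by rwa [top_himp]⟩
        have := congrFun (congrFun h x) ⊤
        rw [this] at hx'
        exact hx'
      · rintro rfl; exact htop
    · right
      ext x
      simp only [Set.mem_univ, iff_true]
      have hx : θ ⊤ x := by rw [h]; trivial
      have := hx.1
      rwa [top_himp] at this
  · -- filters trivial → congruences trivial
    intro hfil θ hθc
    obtain ⟨heq, hm, hj, hi, hb, hd⟩ := hθc
    set F : Set A := {a | θ a ⊤} with hFdef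
    have hF : IsDiaFilter dia F := by
      refine ⟨heq.refl ⊤, ?_, ?_, ?_⟩
      · intro a b ha hab
        have h1 : θ (b ⊔ a) (b ⊔ ⊤) := hj b b a ⊤ (heq.refl b) ha
        rwa [sup_eq_left.2 hab, sup_top_eq] at h1
      · intro a b ha hb'
        have h1 : θ (a ⊓ b) (⊤ ⊓ ⊤) := hm a ⊤ b ⊤ ha hb'
        rwa [top_inf_eq] at h1
      · intro a b hab
        have h1 : θ (a ⊓ (a ⇨ b)) (a ⊓ ⊤) := hm a a (a ⇨ b) ⊤ (heq.refl a) hab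
        rw [inf_himp, inf_top_eq] at h1
        have h2 : θ (dia (a ⊓ b)) (dia a) := hd _ _ h1
        have h3 : θ (dia (a ⊓ b) ⇨ dia b) (dia a ⇨ dia b) :=
          hi _ _ _ _ h2 (heq.refl (dia b))
        have h4 : dia (a ⊓ b) ⇨ dia b = ⊤ :=
          himp_eq_top_iff.2 (hdiamono _ _ inf_le_right)
        rw [h4] at h3
        exact heq.symm h3
    rcases hfil F hF with h | h
    · left
      funext a b
      apply propext
      constructor
      · intro hab
        have h1 : θ (a ⇨ b) (b ⇨ b) := hi a b b b hab (heq.refl b)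
        rw [himp_self] at h1
        have h1' : a ⇨ b ∈ F := h1
        have h2 : θ (b ⇨ a) (a ⇨ a) := hi b a a a (heq.symm hab) (heq.refl a)
        rw [himp_self] at h2
        have h2' : b ⇨ a ∈ F := h2
        rw [h] at h1' h2'
        exact le_antisymm (himp_eq_top_iff.1 h1') (himp_eq_top_iff.1 h2')
      · rintro rfl; exact heq.refl a
    · right
      funext a b
      apply propext
      have hbot : (⊥ : A) ∈ F := by rw [h]; trivial
      have key : ∀ x : A, θ x ⊤ := by
        intro x
        have h1 : θ (x ⊔ ⊥) (x ⊔ ⊤) := hj x x ⊥ ⊤ (heq.refl x) hbot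
        rwa [sup_bot_eq, sup_top_eq] at h1
      exact ⟨fun _ => trivial, fun _ => heq.trans (key a) (heq.symm (key b))⟩
end

section
/- Let A be a temporal Heyting algebra. Then there exists a least congruence among the congruences of A different from the diagonal relation (i.e., a congruence θ, θ ≠ Δ, such that θ ⊆ θ' for every congruence θ' ≠ Δ) if and only if there exists a least ◆-filter among the ◆-filters of A different from {1} (i.e., a ◆-filter F, F ≠ {1}, such that F ⊆ G for every ◆-filter G ≠ {1}). -/
section Helpers
variable {A : Type*} [HeytingAlgebra A]

lemma myL1 {x a b c : A} (h1 : x ≤ a ⇨ b) (h2 : x ≤ b ⇨ c) : x ≤ a ⇨ c := by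
  rw [le_himp_iff] at *
  exact le_trans (le_inf inf_le_left h1) h2

lemma myL2 {x a b c d : A} (h1 : x ≤ a ⇨ b) (h2 : x ≤ c ⇨ d) : x ≤ (a ⊓ c) ⇨ (b ⊓ d) := by
  rw [le_himp_iff] at *
  exact le_inf (le_trans (inf_le_inf_left x inf_le_left) h1)
    (le_trans (inf_le_inf_left x inf_le_right) h2)

lemma myL3 {x a b c d : A} (h1 : x ≤ a ⇨ b) (h2 : x ≤ c ⇨ d) : x ≤ (a ⊔ c) ⇨ (b ⊔ d) := by
  rw [le_himp_iff] at *
  rw [inf_sup_left]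
  exact sup_le_sup h1 h2

lemma myL4 {x a b c d : A} (h1 : x ≤ b ⇨ a) (h2 : x ≤ c ⇨ d) : x ≤ (a ⇨ c) ⇨ (b ⇨ d) := by
  rw [le_himp_iff, le_himp_iff]
  rw [le_himp_iff] at h1 h2
  have hxb : x ⊓ (a ⇨ c) ⊓ b ≤ a :=
    le_trans (le_inf (le_trans inf_le_left inf_le_left) inf_le_right) h1
  have hc : x ⊓ (a ⇨ c) ⊓ b ≤ c := by
    have : x ⊓ (a ⇨ c) ⊓ b ≤ (a ⇨ c) ⊓ a := le_inf (le_trans inf_le_left inf_le_right) hxb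
    exact le_trans this (by rw [inf_comm, inf_himp]; exact inf_le_right)
  exact le_trans (le_inf (le_trans inf_le_left inf_le_left) hc) h2

lemma myBoxMono (box : A → A) (hbox_meet : ∀ a b : A, box (a ⊓ b) = box a ⊓ box b)
    {a b : A} (h : a ≤ b) : box a ≤ box b := by
  have : box a = box (a ⊓ b) := by rw [inf_eq_left.mpr h]
  rw [this, hbox_meet]; exact inf_le_right

lemma myL5 (box : A → A) (hbox_meet : ∀ a b : A, box (a ⊓ b) = box a ⊓ box b)
    (hbox_incr : ∀ a : A, a ≤ box a) {x a b : A} (h : x ≤ a ⇨ b) : x ≤ box a ⇨ box b := by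
  rw [le_himp_iff]
  have h1 : x ⊓ box a ≤ box (a ⇨ b) ⊓ box a :=
    inf_le_inf_right _ (le_trans h (hbox_incr _))
  rw [← hbox_meet] at h1
  refine le_trans h1 (myBoxMono box hbox_meet ?_)
  rw [inf_comm, inf_himp]; exact inf_le_right

lemma myDiaMono (box dia : A → A) (hadj : ∀ a b : A, dia a ≤ b ↔ a ≤ box b)
    {a b : A} (h : a ≤ b) : dia a ≤ dia b :=
  (hadj a (dia b)).2 (le_trans h ((hadj b (dia b)).1 le_rfl))

lemma myInfAbs (a b : A) : a ⊓ ((a ⇨ b) ⊓ (b ⇨ a)) = a ⊓ b := by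
  apply le_antisymm
  · refine le_inf inf_le_left ?_
    have : a ⊓ ((a ⇨ b) ⊓ (b ⇨ a)) ≤ a ⊓ (a ⇨ b) := inf_le_inf_left a inf_le_left
    rw [inf_himp] at this
    exact le_trans this inf_le_right
  · refine le_inf inf_le_left (le_inf ?_ ?_)
    · rw [le_himp_iff]; exact le_trans inf_le_left inf_le_right
    · rw [le_himp_iff]; exact le_trans inf_le_left inf_le_left

/-- congruence induced by a ◆-filter -/
def myTheta (F : Set A) (a b : A) : Prop := (a ⇨ b) ⊓ (b ⇨ a) ∈ F

lemma myThetaTop (F : Set A) (a : A) : myTheta F a ⊤ ↔ a ∈ F := by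
  simp [myTheta, himp_top, top_himp]

lemma myCongOfFilter (box dia : A → A)
    (hbox_meet : ∀ a b : A, box (a ⊓ b) = box a ⊓ box b)
    (hbox_incr : ∀ a : A, a ≤ box a)
    {F : Set A} (hF : IsDiaFilter dia F) : IsCong box dia (myTheta F) := by
  obtain ⟨htop, hup, hinf, hdia⟩ := hF
  have refl : ∀ a : A, myTheta F a a := fun a => by
    simp only [myTheta, himp_self, inf_top_eq]; exact htop
  have symm : ∀ {a b : A}, myTheta F a b → myTheta F b a := fun {a b} h => by
    simpa only [myTheta, inf_comm] using h
  refine ⟨⟨refl, symm, ?_⟩, ?_, ?_, ?_, ?_, ?_⟩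
  · intro a b c h1 h2
    refine hup _ _ (hinf _ _ h1 h2) (le_inf ?_ ?_)
    · exact myL1 (le_trans inf_le_left inf_le_left) (le_trans inf_le_right inf_le_left)
    · exact myL1 (le_trans inf_le_right inf_le_right) (le_trans inf_le_left inf_le_right)
  · intro a b c d h1 h2
    refine hup _ _ (hinf _ _ h1 h2) (le_inf ?_ ?_)
    · exact myL2 (le_trans inf_le_left inf_le_left) (le_trans inf_le_right inf_le_left)
    · exact myL2 (le_trans inf_le_left inf_le_right) (le_trans inf_le_right inf_le_right)
  · intro a b c d h1 h2
    refine hup _ _ (hinf _ _ h1 h2) (le_inf ?_ ?_)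
    · exact myL3 (le_trans inf_le_left inf_le_left) (le_trans inf_le_right inf_le_left)
    · exact myL3 (le_trans inf_le_left inf_le_right) (le_trans inf_le_right inf_le_right)
  · intro a b c d h1 h2
    refine hup _ _ (hinf _ _ h1 h2) (le_inf ?_ ?_)
    · exact myL4 (le_trans inf_le_left inf_le_right) (le_trans inf_le_right inf_le_left)
    · exact myL4 (le_trans inf_le_left inf_le_left) (le_trans inf_le_right inf_le_right)
  · intro a b h
    refine hup _ _ h (le_inf ?_ ?_)
    · exact myL5 box hbox_meet hbox_incr inf_le_left
    · exact myL5 box hbox_meet hbox_incr inf_le_right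
  · intro a b h
    exact hinf _ _ (hdia a b (hup _ _ h inf_le_left)) (hdia b a (hup _ _ h inf_le_right))

lemma myFilterOfCong (box dia : A → A)
    (hadj : ∀ a b : A, dia a ≤ b ↔ a ≤ box b)
    {θ : A → A → Prop} (hθ : IsCong box dia θ) :
    IsDiaFilter dia {a : A | θ a ⊤} := by
  obtain ⟨heq, hinfc, hsupc, himpc, hboxc, hdiac⟩ := hθ
  refine ⟨heq.refl ⊤, ?_, ?_, ?_⟩
  · intro a b ha hab
    have h := hsupc a ⊤ b b ha (heq.refl b)
    rw [sup_eq_right.mpr hab, top_sup_eq] at h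
    exact h
  · intro a b ha hb
    have h := hinfc a ⊤ b ⊤ ha hb
    rw [top_inf_eq] at h
    exact h
  · intro a b h
    have h1 := hinfc _ _ a a h (heq.refl a)
    rw [top_inf_eq, inf_comm, inf_himp] at h1
    have h2 := hdiac _ _ h1
    have h3 : dia (a ⊓ b) ≤ dia b := myDiaMono box dia hadj inf_le_right
    have h4 := himpc _ _ _ _ h2 (heq.refl (dia b))
    rw [himp_eq_top_iff.mpr h3] at h4
    exact heq.symm h4

lemma myCongWitness (box dia : A → A) {θ : A → A → Prop}
    (hθ : IsCong box dia θ) (hne : θ ≠ (fun a b : A => a = b)) :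
    ∃ c : A, θ c ⊤ ∧ c ≠ ⊤ := by
  obtain ⟨heq, hinfc, hsupc, himpc, hboxc, hdiac⟩ := hθ
  have : ∃ a b : A, θ a b ∧ a ≠ b := by
    by_contra h
    push_neg at h
    apply hne
    funext a b
    apply propext
    constructor
    · exact h a b
    · rintro rfl; exact heq.refl a
  obtain ⟨a, b, hab, hne'⟩ := this
  refine ⟨(a ⇨ b) ⊓ (b ⇨ a), ?_, ?_⟩
  · have h1 := himpc a b b b hab (heq.refl b)
    rw [himp_self] at h1
    have h2 := himpc b a a a (heq.symm hab) (heq.refl a)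
    rw [himp_self] at h2
    have h3 := hinfc _ _ _ _ h1 h2
    rw [top_inf_eq] at h3
    exact h3
  · intro hc
    apply hne'
    have h1 : (⊤ : A) ≤ a ⇨ b := le_trans (le_of_eq hc.symm) inf_le_left
    have h2 : (⊤ : A) ≤ b ⇨ a := le_trans (le_of_eq hc.symm) inf_le_right
    exact le_antisymm (himp_eq_top_iff.mp (top_le_iff.mp h1))
      (himp_eq_top_iff.mp (top_le_iff.mp h2))

lemma myFilterWitness {F : Set A} (htop : (⊤ : A) ∈ F) (hne : F ≠ {(⊤ : A)}) :
    ∃ c ∈ F, c ≠ ⊤ := by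
  by_contra h
  push_neg at h
  apply hne
  ext x
  simp only [Set.mem_singleton_iff]
  exact ⟨fun hx => h x hx, fun hx => hx ▸ htop⟩

end Helpers

/-- A temporal Heyting algebra has a least non-diagonal congruence iff it has a
least ◆-filter different from `{⊤}`. -/
theorem stmt17 {A : Type*} [HeytingAlgebra A] (box dia : A → A)
    (hbox_meet : ∀ a b : A, box (a ⊓ b) = box a ⊓ box b)
    (hbox_incr : ∀ a : A, a ≤ box a)
    (hbox_front : ∀ a b : A, box a ≤ b ⊔ (b ⇨ a))
    (hadj : ∀ a b : A, dia a ≤ b ↔ a ≤ box b) :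
    (∃ θ : A → A → Prop, IsCong box dia θ ∧ θ ≠ (fun a b : A => a = b) ∧
      ∀ θ' : A → A → Prop, IsCong box dia θ' → θ' ≠ (fun a b : A => a = b) →
        ∀ a b : A, θ a b → θ' a b) ↔
    (∃ F : Set A, IsDiaFilter dia F ∧ F ≠ {(⊤ : A)} ∧
      ∀ G : Set A, IsDiaFilter dia G → G ≠ {(⊤ : A)} → F ⊆ G) := by
  constructor
  · rintro ⟨θ, hθ, hne, hmin⟩
    refine ⟨{a : A | θ a ⊤}, myFilterOfCong box dia hadj hθ, ?_, ?_⟩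
    · obtain ⟨c, hc, hcne⟩ := myCongWitness box dia hθ hne
      intro hFeq
      have : c ∈ ({(⊤ : A)} : Set A) := hFeq ▸ hc
      exact hcne (Set.mem_singleton_iff.mp this)
    · intro G hG hGne
      have hGcong := myCongOfFilter box dia hbox_meet hbox_incr hG
      have hGne' : myTheta G ≠ (fun a b : A => a = b) := by
        obtain ⟨c, hcG, hcne⟩ := myFilterWitness hG.1 hGne
        intro h
        have hct : myTheta G c ⊤ := (myThetaTop G c).mpr hcG
        rw [h] at hct
        exact hcne hct
      intro x hx
      exact (myThetaTop G x).mp (hmin (myTheta G) hGcong hGne' x ⊤ hx)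
  · rintro ⟨F, hF, hne, hmin⟩
    refine ⟨myTheta F, myCongOfFilter box dia hbox_meet hbox_incr hF, ?_, ?_⟩
    · obtain ⟨c, hcF, hcne⟩ := myFilterWitness hF.1 hne
      intro h
      have hct : myTheta F c ⊤ := (myThetaTop F c).mpr hcF
      rw [h] at hct
      exact hcne hct
    · intro θ' hθ' hθne' a b hab
      obtain ⟨heq', hinfc', hsupc', himpc', hboxc', hdiac'⟩ := hθ'
      have hF' : IsDiaFilter dia {x : A | θ' x ⊤} :=
        myFilterOfCong box dia hadj ⟨heq', hinfc', hsupc', himpc', hboxc', hdiac'⟩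
      have hFne' : ({x : A | θ' x ⊤} : Set A) ≠ {(⊤ : A)} := by
        obtain ⟨c, hc, hcne⟩ := myCongWitness box dia
          ⟨heq', hinfc', hsupc', himpc', hboxc', hdiac'⟩ hθne'
        intro hFeq
        have : c ∈ ({(⊤ : A)} : Set A) := hFeq ▸ hc
        exact hcne (Set.mem_singleton_iff.mp this)
      have hsub := hmin _ hF' hFne'
      have hc : θ' ((a ⇨ b) ⊓ (b ⇨ a)) ⊤ := hsub hab
      have h1 := hinfc' a a _ _ (heq'.refl a) hc
      rw [inf_top_eq, myInfAbs a b] at h1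
      have h2 := hinfc' b b _ _ (heq'.refl b) hc
      rw [inf_top_eq, inf_comm (a ⇨ b) (b ⇨ a), myInfAbs b a, inf_comm b a] at h2
      exact heq'.trans (heq'.symm h1) h2
end

section
/- Let A be a finite nontrivial temporal Heyting algebra (0 ≠ 1). Then A is simple (its only congruences are the diagonal relation and the all-relation) if and only if the only ◆-compatible elements of A are 0 and 1. -/
/-!
Congruences of a Heyting algebra correspond to filters, and in a finite one every filter is
principal: a congruence `θ` is `a θ b ↔ x ⊓ a = x ⊓ b`, where `x` is the least element of the
class of `⊤`. Such a relation always respects `⊓`, `⊔`, `⇨` and (since `x ≤ □x`) also `□`; it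
respects `◆` exactly when `x` is ◆-compatible. Since `x ↦ (x ⊓ · = x ⊓ ·)` is injective, with
`⊤ ↦` the diagonal and `⊥ ↦` the all-relation, simplicity means that `⊥` and `⊤` are the only
◆-compatible elements.
-/

section TemporalHeyting

variable {A : Type*} [HeytingAlgebra A]

def principalCong (x : A) (a b : A) : Prop :=
  x ⊓ a = x ⊓ b

theorem principalCong_top : principalCong (⊤ : A) = fun a b => a = b := by
  funext a b
  simp [principalCong]

theorem principalCong_bot : principalCong (⊥ : A) = fun _ _ => True := by
  funext a b
  simp [principalCong]

theorem principalCong_injective : Function.Injective (principalCong : A → A → A → Prop) := by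
  have key : ∀ x y : A, principalCong x = principalCong y → y ≤ x := fun x y hxy => by
    have hx : principalCong x x ⊤ := by simp [principalCong]
    rw [hxy, principalCong, inf_top_eq] at hx
    exact inf_eq_left.1 hx
  exact fun x y hxy => le_antisymm (key y x hxy.symm) (key x y hxy)

theorem diaCompat_bot (dia : A → A) : DiaCompat dia ⊥ := by
  simp [DiaCompat]

theorem diaCompat_top (dia : A → A) : DiaCompat dia ⊤ := by
  simp [DiaCompat]

theorem inf_himp_le_himp_of_inf_eq {x a b c d : A} (hab : x ⊓ a = x ⊓ b) (hcd : x ⊓ c = x ⊓ d) :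
    x ⊓ (a ⇨ c) ≤ b ⇨ d := by
  rw [le_himp_iff]
  calc x ⊓ (a ⇨ c) ⊓ b = x ⊓ a ⊓ (a ⇨ c) := by rw [inf_right_comm, hab]
    _ = x ⊓ (a ⊓ c) := by rw [inf_assoc, inf_himp]
    _ ≤ x ⊓ c := inf_le_inf_left x inf_le_right
    _ = x ⊓ d := hcd
    _ ≤ d := inf_le_right

theorem isCong_principalCong {box dia : A → A}
    (hbox_meet : ∀ a b : A, box (a ⊓ b) = box a ⊓ box b) (hbox_incr : ∀ a : A, a ≤ box a)
    (hadj : GaloisConnection dia box) {x : A} (hx : DiaCompat dia x) :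
    IsCong box dia (principalCong x) := by
  have box_eq (a : A) : x ⊓ box a = x ⊓ box (x ⊓ a) := by
    rw [hbox_meet, ← inf_assoc, inf_eq_left.2 (hbox_incr x)]
  have dia_le {a b : A} (hab : x ⊓ a = x ⊓ b) : x ⊓ dia a ≤ x ⊓ dia b :=
    le_inf inf_le_left <| calc
      x ⊓ dia a ≤ dia (x ⊓ a) := hx a
      _ = dia (x ⊓ b) := by rw [hab]
      _ ≤ dia b := hadj.monotone_l inf_le_right
  refine ⟨⟨fun _ => rfl, Eq.symm, Eq.trans⟩, ?_, ?_, ?_, ?_, ?_⟩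
  · intro a b c d hab hcd
    rw [principalCong, inf_inf_distrib_left, hab, hcd, ← inf_inf_distrib_left]
  · intro a b c d hab hcd
    rw [principalCong, inf_sup_left, hab, hcd, ← inf_sup_left]
  · intro a b c d hab hcd
    exact le_antisymm (le_inf inf_le_left (inf_himp_le_himp_of_inf_eq hab hcd))
      (le_inf inf_le_left (inf_himp_le_himp_of_inf_eq hab.symm hcd.symm))
  · intro a b hab
    rw [principalCong, box_eq a, box_eq b, hab]
  · intro a b hab
    exact le_antisymm (dia_le hab) (dia_le hab.symm)

theorem diaCompat_of_isCong_principalCong {box dia : A → A} {x : A}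
    (hx : IsCong box dia (principalCong x)) : DiaCompat dia x := by
  intro b
  have hxb : principalCong x (x ⊓ b) b := by rw [principalCong, ← inf_assoc, inf_idem]
  calc x ⊓ dia b = x ⊓ dia (x ⊓ b) := (hx.2.2.2.2.2 _ _ hxb).symm
    _ ≤ dia (x ⊓ b) := inf_le_right

theorem IsCong.exists_eq_principalCong [Finite A] {box dia : A → A} {θ : A → A → Prop}
    (hθ : IsCong box dia θ) : ∃ x, θ = principalCong x := by
  obtain ⟨hequiv, hinf, -, hhimp, -, -⟩ := hθ
  set F : Set A := {y | θ y ⊤}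
  set x := F.toFinite.toFinset.inf id
  have hxF : θ x ⊤ := by
    refine Finset.inf_induction (p := (θ · ⊤)) (hequiv.refl ⊤) (fun a ha b hb => ?_)
      fun y hy => F.toFinite.mem_toFinset.1 hy
    simpa using hinf a ⊤ b ⊤ ha hb
  have hx_le {y : A} (hy : θ y ⊤) : x ≤ y :=
    Finset.inf_le (f := id) (F.toFinite.mem_toFinset.2 hy)
  have inf_le_of_rel {a b : A} (hab : θ a b) : x ⊓ b ≤ a :=
    le_himp_iff.1 <| hx_le <| by simpa using hhimp b b a b (hequiv.refl b) hab
  have rel_inf (a : A) : θ a (x ⊓ a) := by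
    simpa using hinf ⊤ x a a (hequiv.symm hxF) (hequiv.refl a)
  refine ⟨x, funext₂ fun a b => propext ⟨fun hab => ?_, fun hab => ?_⟩⟩
  · exact le_antisymm (le_inf inf_le_left (inf_le_of_rel (hequiv.symm hab)))
      (le_inf inf_le_left (inf_le_of_rel hab))
  · exact hequiv.trans (rel_inf a) (hab ▸ hequiv.symm (rel_inf b))

end TemporalHeyting

theorem stmt18_general {A : Type*} [HeytingAlgebra A] [Finite A] (box dia : A → A)
    (hbox_meet : ∀ a b : A, box (a ⊓ b) = box a ⊓ box b)
    (hbox_incr : ∀ a : A, a ≤ box a)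
    (hadj : ∀ a b : A, dia a ≤ b ↔ a ≤ box b) :
    (∀ θ : A → A → Prop, IsCong box dia θ →
        (θ = fun a b : A => a = b) ∨ (θ = fun _ _ : A => True)) ↔
    {a : A | DiaCompat dia a} = {⊥, ⊤} := by
  constructor
  · intro hsimple
    ext x
    refine ⟨fun hx => ?_, by
      rintro (rfl | rfl)
      exacts [diaCompat_bot dia, diaCompat_top dia]⟩
    rcases hsimple _ (isCong_principalCong hbox_meet hbox_incr hadj hx) with h | h
    · exact Or.inr (principalCong_injective (h.trans principalCong_top.symm))
    · exact Or.inl (principalCong_injective (h.trans principalCong_bot.symm))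
  · intro hcompat θ hθ
    obtain ⟨x, rfl⟩ := hθ.exists_eq_principalCong
    have hx : x ∈ ({⊥, ⊤} : Set A) := hcompat ▸ diaCompat_of_isCong_principalCong hθ
    rcases hx with rfl | rfl
    · exact Or.inr principalCong_bot
    · exact Or.inl principalCong_top

/-- A finite nontrivial temporal Heyting algebra is simple iff its only
◆-compatible elements are `⊥` and `⊤`. -/
theorem stmt18 {A : Type*} [HeytingAlgebra A] [Finite A] (box dia : A → A)
    (hbox_meet : ∀ a b : A, box (a ⊓ b) = box a ⊓ box b)
    (hbox_incr : ∀ a : A, a ≤ box a)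
    (hbox_front : ∀ a b : A, box a ≤ b ⊔ (b ⇨ a))
    (hadj : ∀ a b : A, dia a ≤ b ↔ a ≤ box b)
    (hnt : (⊥ : A) ≠ ⊤) :
    (∀ θ : A → A → Prop, IsCong box dia θ →
        (θ = fun a b : A => a = b) ∨ (θ = fun _ _ : A => True)) ↔
    {a : A | DiaCompat dia a} = {⊥, ⊤} :=
  stmt18_general box dia hbox_meet hbox_incr hadj
end
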